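/- arXiv:1807.08287 — 5 statements merged into one kernel-verified Lean document; each statement's English description precedes it below -/
import Mathlib

section
/- For each of the seven types R_N ∈ {A_{N−1}, B_N, B_N^∨, C_N, C_N^∨, BC_N, D_N}, the weight Q^{R_N}(z) is doubly periodic with periods (L, iW): for every m ∈ {1,…,N} and every z ∈ ℂᴺ, Q^{R_N}(z₁,…,z_m+L,…,z_N) = Q^{R_N}(z) and Q^{R_N}(z₁,…,z_m+iW,…,z_N) = Q^{R_N}(z). -/
open Complex MeasureTheory
open scoped Real ComplexConjugate

noncomputable section

/-- The Jacobi theta function θ₀. -/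
def jtheta0 (v τ : ℂ) : ℂ :=
  ∑' n : ℤ, (-1 : ℂ) ^ n * Complex.exp (π * I * τ * (n : ℂ) ^ 2) *
    Complex.exp (2 * π * I * (n : ℂ) * v)

/-- The Jacobi theta function θ₁. -/
def jtheta1 (v τ : ℂ) : ℂ :=
  I * ∑' n : ℤ, (-1 : ℂ) ^ n * Complex.exp (π * I * τ * ((n : ℂ) - 1 / 2) ^ 2) *
    Complex.exp ((2 * (n : ℂ) - 1) * π * I * v)

/-- The Jacobi theta function θ₂. -/
def jtheta2 (v τ : ℂ) : ℂ :=
  ∑' n : ℤ, Complex.exp (π * I * τ * ((n : ℂ) - 1 / 2) ^ 2) *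
    Complex.exp ((2 * (n : ℂ) - 1) * π * I * v)

/-- The Jacobi theta function θ₃. -/
def jtheta3 (v τ : ℂ) : ℂ :=
  ∑' n : ℤ, Complex.exp (π * I * τ * (n : ℂ) ^ 2) * Complex.exp (2 * π * I * (n : ℂ) * v)

/-- Dedekind's eta function. -/
def dedekindEta (τ : ℂ) : ℂ :=
  Complex.exp (π * I * τ / 12) * ∏' n : ℕ, (1 - Complex.exp (2 * π * I * ((n : ℂ) + 1) * τ))

/-- The seven types of irreducible reduced affine root systems. -/
inductive RootType | A | B | Bv | C | Cv | BC | D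

/-- The constant 𝒩 for each type. -/
def calN (R : RootType) (N : ℕ) : ℕ :=
  match R with
  | .A => N
  | .B => 2 * N - 1
  | .Bv => 2 * N
  | .C => 2 * (N + 1)
  | .Cv => 2 * N
  | .BC => 2 * N + 1
  | .D => 2 * (N - 1)

/-- Product over ordered pairs j < k. -/
def pairProd {N : ℕ} (f : Fin N → Fin N → ℂ) : ℂ :=
  ∏ j : Fin N, ∏ k : Fin N, if j < k then f j k else 1

/-- P(ξ;τ) = ∏_{j<k} θ₁(ξ_k−ξ_j;τ) θ₁(ξ_k+ξ_j;τ). -/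
def Pden {N : ℕ} (ξ : Fin N → ℂ) (τ : ℂ) : ℂ :=
  pairProd fun j k => jtheta1 (ξ k - ξ j) τ * jtheta1 (ξ k + ξ j) τ

/-- The Macdonald denominators W^{R_N}(ξ;τ). -/
def WR (R : RootType) {N : ℕ} (ξ : Fin N → ℂ) (τ : ℂ) : ℂ :=
  match R with
  | .A => pairProd fun j k => jtheta1 (ξ k - ξ j) τ
  | .B => (∏ l : Fin N, jtheta1 (ξ l) τ) * Pden ξ τ
  | .Bv => (∏ l : Fin N, jtheta1 (2 * ξ l) (2 * τ)) * Pden ξ τ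
  | .C => (∏ l : Fin N, jtheta1 (2 * ξ l) τ) * Pden ξ τ
  | .Cv => (∏ l : Fin N, jtheta1 (ξ l) (τ / 2)) * Pden ξ τ
  | .BC => (∏ l : Fin N, jtheta1 (ξ l) τ * jtheta0 (2 * ξ l) (2 * τ)) * Pden ξ τ
  | .D => Pden ξ τ

/-- The doubly periodic weight Q^{R_N}(z). -/
def QR (R : RootType) {N : ℕ} (L W : ℝ) (z : Fin N → ℂ) : ℝ :=
  match R with
  | .A =>
      Real.exp (-(2 * π * N / (L * W)) * ∑ j, (z j).im ^ 2) *
        ‖(if Even N then jtheta0 (∑ k, z k / L) (I * W / L)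
          else jtheta3 (∑ k, z k / L) (I * W / L))‖ ^ 2 *
        ‖(WR RootType.A (fun j => z j / L) (I * W / L))‖ ^ 2
  | _ =>
      Real.exp (-(2 * π * (calN R N) / (L * W)) * ∑ j, (z j).im ^ 2) *
        ‖(WR R (fun j => z j / L) (I * W / L))‖ ^ 2

/-!
Write `ξ = z / L` and `τ = i W / L`. The quasi-periodicity
`θ(v + τ'; τ') = ± e^{-πiτ' - 2πiv} θ(v; τ')` of `θ₀, θ₁, θ₃` makes the Gaussian-weighted
modulus `e^{-π (Im v)² / Im τ'} |θ(v; τ')|` invariant under `v ↦ v + ℤ + τ'ℤ`. Weighting every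
theta factor of `W^{R_N}` (and `θ_{s(N)}` in type `A`) in this way reproduces exactly the
Gaussian prefactor of `Q^{R_N}`, because the weights add up to `𝒩 ∑ⱼ (Im ξⱼ)² / Im τ`. So
`√Q^{R_N}` is a product of such weighted moduli at integer combinations of the `ξⱼ` (with
`τ' ∈ {τ, 2τ, τ/2}`), each invariant when one `ξₘ` moves by `1` or by `τ`.
-/

lemma tsum_eq_mul_tsum_add_one {f g : ℤ → ℂ} {μ : ℂ} (h : ∀ n, f n = μ * g (n + 1)) :
    ∑' n, f n = μ * ∑' n, g n := by
  simp_rw [h, tsum_mul_left]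
  congr 1
  exact (Equiv.addRight (1 : ℤ)).tsum_eq g

lemma exp_two_pi_I_int_mul_add_one (n : ℤ) (v : ℂ) :
    cexp (2 * π * I * n * (v + 1)) = cexp (2 * π * I * n * v) := by
  rw [mul_add, mul_one, Complex.exp_add, mul_comm (2 * π * I) (n : ℂ),
    Complex.exp_int_mul_two_pi_mul_I, mul_one]

lemma jtheta0_add_one (v τ : ℂ) : jtheta0 (v + 1) τ = jtheta0 v τ := by
  simp only [jtheta0, exp_two_pi_I_int_mul_add_one]

lemma jtheta3_add_one (v τ : ℂ) : jtheta3 (v + 1) τ = jtheta3 v τ := by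
  simp only [jtheta3, exp_two_pi_I_int_mul_add_one]

lemma jtheta1_add_one (v τ : ℂ) : jtheta1 (v + 1) τ = -jtheta1 v τ := by
  have h (n : ℤ) :
      cexp ((2 * n - 1) * π * I * (v + 1)) = -cexp ((2 * n - 1) * π * I * v) := by
    rw [show (2 * n - 1) * π * I * (v + 1) =
        (2 * n - 1) * π * I * v + (n * (2 * π * I) - π * I) by ring,
      Complex.exp_add, Complex.exp_sub, Complex.exp_int_mul_two_pi_mul_I, Complex.exp_pi_mul_I]
    ring
  simp only [jtheta1, h, mul_neg, tsum_neg]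

lemma jtheta0_add_tau (v τ : ℂ) :
    jtheta0 (v + τ) τ = -cexp (-(π * I * τ) - 2 * π * I * v) * jtheta0 v τ := by
  refine tsum_eq_mul_tsum_add_one fun n => ?_
  have hexp : cexp (π * I * τ * n ^ 2) * cexp (2 * π * I * n * (v + τ)) =
      cexp (-(π * I * τ) - 2 * π * I * v) *
        (cexp (π * I * τ * ↑(n + 1) ^ 2) * cexp (2 * π * I * ↑(n + 1) * v)) := by
    rw [← Complex.exp_add, ← Complex.exp_add, ← Complex.exp_add]
    push_cast
    ring_nf
  rw [zpow_add_one₀ (by norm_num), mul_assoc, hexp]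
  ring

lemma jtheta1_add_tau (v τ : ℂ) :
    jtheta1 (v + τ) τ = -cexp (-(π * I * τ) - 2 * π * I * v) * jtheta1 v τ := by
  rw [jtheta1, jtheta1, mul_left_comm]
  refine congrArg _ (tsum_eq_mul_tsum_add_one fun n => ?_)
  have hexp :
      cexp (π * I * τ * (n - 1 / 2) ^ 2) * cexp ((2 * n - 1) * π * I * (v + τ)) =
        cexp (-(π * I * τ) - 2 * π * I * v) * (cexp (π * I * τ * (↑(n + 1) - 1 / 2) ^ 2) *
          cexp ((2 * ↑(n + 1) - 1) * π * I * v)) := by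
    rw [← Complex.exp_add, ← Complex.exp_add, ← Complex.exp_add]
    push_cast
    ring_nf
  rw [zpow_add_one₀ (by norm_num), mul_assoc, hexp]
  ring

lemma jtheta3_add_tau (v τ : ℂ) :
    jtheta3 (v + τ) τ = cexp (-(π * I * τ) - 2 * π * I * v) * jtheta3 v τ := by
  refine tsum_eq_mul_tsum_add_one fun n => ?_
  rw [← Complex.exp_add, ← Complex.exp_add, ← Complex.exp_add]
  push_cast
  ring_nf

lemma norm_exp_quasiperiod (v τ : ℂ) :
    ‖cexp (-(π * I * τ) - 2 * π * I * v)‖ = Real.exp (π * τ.im + 2 * π * v.im) := by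
  rw [Complex.norm_exp]
  simp

def periodLattice (τ : ℂ) : AddSubgroup ℂ := AddSubgroup.closure {1, τ}

lemma one_mem_periodLattice (τ : ℂ) : 1 ∈ periodLattice τ :=
  AddSubgroup.subset_closure (by simp)

lemma self_mem_periodLattice (τ : ℂ) : τ ∈ periodLattice τ :=
  AddSubgroup.subset_closure (by simp)

lemma two_mul_mem_periodLattice {τ x : ℂ} (hx : x ∈ periodLattice τ) :
    2 * x ∈ periodLattice τ :=
  two_mul x ▸ add_mem hx hx

lemma two_mul_mem_periodLattice_two_mul {τ x : ℂ} (hx : x ∈ periodLattice τ) :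
    2 * x ∈ periodLattice (2 * τ) := by
  obtain ⟨a, b, rfl⟩ := AddSubgroup.mem_closure_pair.1 hx
  refine AddSubgroup.mem_closure_pair.2 ⟨2 * a, b, ?_⟩
  simp only [zsmul_eq_mul]
  push_cast
  ring

lemma periodLattice_le_half (τ : ℂ) : periodLattice τ ≤ periodLattice (τ / 2) := by
  refine (AddSubgroup.closure_le _).2 ?_
  rintro x (rfl | rfl)
  · exact one_mem_periodLattice _
  · simpa using add_mem (self_mem_periodLattice (x / 2)) (self_mem_periodLattice (x / 2))

def weightedNorm (a : ℝ) (w : ℂ) : ℝ := Real.exp (-(π * a)) * ‖w‖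

lemma weightedNorm_mul (a b : ℝ) (w w' : ℂ) :
    weightedNorm a w * weightedNorm b w' = weightedNorm (a + b) (w * w') := by
  simp only [weightedNorm, norm_mul, mul_add, neg_add, Real.exp_add]
  ring

lemma prod_weightedNorm {ι : Type*} (s : Finset ι) (a : ι → ℝ) (w : ι → ℂ) :
    ∏ i ∈ s, weightedNorm (a i) (w i) = weightedNorm (∑ i ∈ s, a i) (∏ i ∈ s, w i) := by
  simp only [weightedNorm, Finset.prod_mul_distrib, norm_prod, ← Real.exp_sum, Finset.mul_sum,
    Finset.sum_neg_distrib]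

lemma weightedNorm_sq (a : ℝ) (w : ℂ) :
    weightedNorm a w ^ 2 = Real.exp (-(2 * π * a)) * ‖w‖ ^ 2 := by
  rw [weightedNorm, mul_pow, ← Real.exp_nat_mul]
  congr 2
  push_cast
  ring

def gaussNorm (θ : ℂ → ℂ → ℂ) (τ v : ℂ) : ℝ := weightedNorm (v.im ^ 2 / τ.im) (θ v τ)

lemma gaussNorm_add_of_mem {θ : ℂ → ℂ → ℂ} {τ : ℂ} (hτ : τ.im ≠ 0)
    (h_one : ∀ v, ‖θ (v + 1) τ‖ = ‖θ v τ‖)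
    (h_tau : ∀ v, ‖θ (v + τ) τ‖ = Real.exp (π * τ.im + 2 * π * v.im) * ‖θ v τ‖)
    {c : ℂ} (hc : c ∈ periodLattice τ) (v : ℂ) : gaussNorm θ τ (v + c) = gaussNorm θ τ v := by
  induction hc using AddSubgroup.closure_induction generalizing v with
  | mem x hx =>
    rcases hx with rfl | rfl
    · rw [gaussNorm, gaussNorm, weightedNorm, weightedNorm, h_one, Complex.add_im,
        Complex.one_im, add_zero]
    · rw [gaussNorm, gaussNorm, weightedNorm, weightedNorm, h_tau, ← mul_assoc, ← Real.exp_add,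
        Complex.add_im]
      congr 2
      field_simp
      ring
  | zero => rw [add_zero]
  | add x y _ _ hx hy => rw [← add_assoc, hy, hx]
  | neg x _ hx => rw [← hx (v + -x), neg_add_cancel_right]

lemma gaussNorm_jtheta0_add {τ c : ℂ} (hτ : τ.im ≠ 0) (hc : c ∈ periodLattice τ) (v : ℂ) :
    gaussNorm jtheta0 τ (v + c) = gaussNorm jtheta0 τ v :=
  gaussNorm_add_of_mem hτ (fun v => by rw [jtheta0_add_one])
    (fun v => by rw [jtheta0_add_tau, norm_mul, norm_neg, norm_exp_quasiperiod]) hc v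

lemma gaussNorm_jtheta1_add {τ c : ℂ} (hτ : τ.im ≠ 0) (hc : c ∈ periodLattice τ) (v : ℂ) :
    gaussNorm jtheta1 τ (v + c) = gaussNorm jtheta1 τ v :=
  gaussNorm_add_of_mem hτ (fun v => by rw [jtheta1_add_one, norm_neg])
    (fun v => by rw [jtheta1_add_tau, norm_mul, norm_neg, norm_exp_quasiperiod]) hc v

lemma gaussNorm_jtheta3_add {τ c : ℂ} (hτ : τ.im ≠ 0) (hc : c ∈ periodLattice τ) (v : ℂ) :
    gaussNorm jtheta3 τ (v + c) = gaussNorm jtheta3 τ v :=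
  gaussNorm_add_of_mem hτ (fun v => by rw [jtheta3_add_one])
    (fun v => by rw [jtheta3_add_tau, norm_mul, norm_exp_quasiperiod]) hc v

def pairs (N : ℕ) : Finset (Fin N × Fin N) := {p | p.1 < p.2}

lemma pairProd_eq_prod_pairs {N : ℕ} (f : Fin N → Fin N → ℂ) :
    pairProd f = ∏ p ∈ pairs N, f p.1 p.2 := by
  rw [pairs, Finset.prod_filter, Fintype.prod_prod_type]
  rfl

lemma two_mul_sum_pairs {N : ℕ} {g : Fin N → Fin N → ℝ} (hg : ∀ j k, g j k = g k j) :
    2 * ∑ p ∈ pairs N, g p.1 p.2 = ∑ j, ∑ k, g j k - ∑ j, g j j := by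
  have hsplit (j k : Fin N) : g j k = (if j < k then g j k else 0) +
      (if k < j then g k j else 0) + (if j = k then g j j else 0) := by
    rcases lt_trichotomy j k with h | rfl | h
    · simp [h, h.not_gt, h.ne]
    · simp
    · simp [h, h.not_gt, h.ne', hg j k]
  have hswap : ∑ j : Fin N, ∑ k, (if k < j then g k j else 0) =
      ∑ j : Fin N, ∑ k, (if j < k then g j k else 0) := Finset.sum_comm
  rw [Finset.sum_congr rfl fun j _ => Finset.sum_congr rfl fun k _ => hsplit j k]
  simp only [Finset.sum_add_distrib, hswap, Finset.sum_ite_eq, Finset.mem_univ, if_true]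
  rw [pairs, Finset.sum_filter, Fintype.sum_prod_type]
  ring

lemma sum_pairs_sq_sub {N : ℕ} (y : Fin N → ℝ) :
    ∑ p ∈ pairs N, (y p.2 - y p.1) ^ 2 = N * ∑ j, y j ^ 2 - (∑ j, y j) ^ 2 := by
  have h := two_mul_sum_pairs (g := fun j k => (y k - y j) ^ 2) fun j k => by ring
  have hfull : ∑ j, ∑ k, (y k - y j) ^ 2 = 2 * N * ∑ j, y j ^ 2 - 2 * (∑ j, y j) ^ 2 := by
    simp only [sub_sq, Finset.sum_add_distrib, Finset.sum_sub_distrib, ← Finset.mul_sum,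
      ← Finset.sum_mul, Finset.sum_const, Finset.card_univ, Fintype.card_fin, nsmul_eq_mul]
    ring
  simp only [hfull, sub_self, ne_eq, OfNat.ofNat_ne_zero, not_false_eq_true, zero_pow,
    Finset.sum_const_zero, sub_zero] at h
  linarith

lemma sum_pairs_sq_sub_add_sq_add {N : ℕ} (y : Fin N → ℝ) :
    ∑ p ∈ pairs N, ((y p.2 - y p.1) ^ 2 + (y p.2 + y p.1) ^ 2) =
      2 * (N - 1) * ∑ j, y j ^ 2 := by
  have h := two_mul_sum_pairs (g := fun j k => (y k - y j) ^ 2 + (y k + y j) ^ 2)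
    fun j k => by ring
  have hg (j k : Fin N) : (y k - y j) ^ 2 + (y k + y j) ^ 2 = 2 * y j ^ 2 + 2 * y k ^ 2 := by
    ring
  have hfull : ∑ j : Fin N, ∑ k, (2 * y j ^ 2 + 2 * y k ^ 2) = 4 * N * ∑ j, y j ^ 2 := by
    simp only [Finset.sum_add_distrib, ← Finset.mul_sum, Finset.sum_const, Finset.card_univ,
      Fintype.card_fin, nsmul_eq_mul]
    ring
  have hdiag : ∑ j : Fin N, (2 * y j ^ 2 + 2 * y j ^ 2) = 4 * ∑ j, y j ^ 2 := by
    rw [Finset.mul_sum]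
    exact Finset.sum_congr rfl fun j _ => by ring
  simp only [hg, hfull, hdiag] at h
  rw [Finset.sum_congr rfl fun p _ => hg p.1 p.2]
  linarith

def thetaS (N : ℕ) : ℂ → ℂ → ℂ := if Even N then jtheta0 else jtheta3

def pairGauss {N : ℕ} (ξ : Fin N → ℂ) (τ : ℂ) : ℝ :=
  ∏ p ∈ pairs N, gaussNorm jtheta1 τ (ξ p.2 - ξ p.1) * gaussNorm jtheta1 τ (ξ p.2 + ξ p.1)

def gaussDenom (R : RootType) {N : ℕ} (ξ : Fin N → ℂ) (τ : ℂ) : ℝ :=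
  match R with
  | .A =>
      gaussNorm (thetaS N) τ (∑ k, ξ k) * ∏ p ∈ pairs N, gaussNorm jtheta1 τ (ξ p.2 - ξ p.1)
  | .B => (∏ l, gaussNorm jtheta1 τ (ξ l)) * pairGauss ξ τ
  | .Bv => (∏ l, gaussNorm jtheta1 (2 * τ) (2 * ξ l)) * pairGauss ξ τ
  | .C => (∏ l, gaussNorm jtheta1 τ (2 * ξ l)) * pairGauss ξ τ
  | .Cv => (∏ l, gaussNorm jtheta1 (τ / 2) (ξ l)) * pairGauss ξ τ
  | .BC =>
      (∏ l, gaussNorm jtheta1 τ (ξ l) * gaussNorm jtheta0 (2 * τ) (2 * ξ l)) * pairGauss ξ τ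
  | .D => pairGauss ξ τ

section Exponents

variable {N : ℕ} (ξ : Fin N → ℂ) (τ : ℂ)

lemma pairGauss_eq :
    pairGauss ξ τ = weightedNorm (2 * (N - 1) * (∑ j, (ξ j).im ^ 2) / τ.im) (Pden ξ τ) := by
  rw [pairGauss, Pden, pairProd_eq_prod_pairs]
  simp only [gaussNorm, weightedNorm_mul, prod_weightedNorm]
  congr 1
  rw [← sum_pairs_sq_sub_add_sq_add, Finset.sum_div]
  simp only [Complex.sub_im, Complex.add_im, add_div]

lemma gaussDenom_A_eq :
    gaussDenom .A ξ τ =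
      weightedNorm (N * (∑ j, (ξ j).im ^ 2) / τ.im) (thetaS N (∑ k, ξ k) τ * WR .A ξ τ) := by
  rw [gaussDenom, WR, pairProd_eq_prod_pairs]
  simp only [gaussNorm, prod_weightedNorm, weightedNorm_mul]
  congr 1
  rw [Complex.im_sum, ← Finset.sum_div, ← add_div]
  simp only [Complex.sub_im, sum_pairs_sq_sub fun j => (ξ j).im]
  ring

lemma gaussDenom_eq (hN : 0 < N) {R : RootType} (hR : R ≠ .A) :
    gaussDenom R ξ τ = weightedNorm (calN R N * (∑ j, (ξ j).im ^ 2) / τ.im) (WR R ξ τ) := by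
  cases R
  case A => exact absurd rfl hR
  case D =>
    simp only [gaussDenom, WR, pairGauss_eq, calN]
    push_cast [Nat.cast_sub hN]
    rfl
  all_goals
    simp only [gaussDenom, WR, pairGauss_eq, gaussNorm, prod_weightedNorm, weightedNorm_mul,
      calN]
    congr 1
    push_cast [Nat.cast_sub hN, Nat.cast_sub (by omega : 1 ≤ 2 * N)]
    simp only [Complex.mul_im, Complex.re_ofNat, Complex.im_ofNat, zero_mul, add_zero,
      Complex.div_ofNat_im, mul_div_assoc, Finset.sum_div, Finset.mul_sum,
      ← Finset.sum_add_distrib]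
    exact Finset.sum_congr rfl fun i _ => by ring

end Exponents

lemma gaussNorm_thetaS_add (N : ℕ) {τ c : ℂ} (hτ : τ.im ≠ 0) (hc : c ∈ periodLattice τ)
    (v : ℂ) :
    gaussNorm (thetaS N) τ (v + c) = gaussNorm (thetaS N) τ v := by
  unfold thetaS
  split_ifs
  · exact gaussNorm_jtheta0_add hτ hc v
  · exact gaussNorm_jtheta3_add hτ hc v

section Invariance

variable {N : ℕ} {τ : ℂ} (ξ : Fin N → ℂ) {δ : Fin N → ℂ}

lemma prod_pairs_gaussNorm_sub_add (hτ : τ.im ≠ 0) (hδ : ∀ j, δ j ∈ periodLattice τ) :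
    ∏ p ∈ pairs N, gaussNorm jtheta1 τ ((ξ + δ) p.2 - (ξ + δ) p.1) =
      ∏ p ∈ pairs N, gaussNorm jtheta1 τ (ξ p.2 - ξ p.1) := by
  refine Finset.prod_congr rfl fun p _ => ?_
  rw [Pi.add_apply, Pi.add_apply, add_sub_add_comm,
    gaussNorm_jtheta1_add hτ (sub_mem (hδ _) (hδ _))]

lemma pairGauss_add (hτ : τ.im ≠ 0) (hδ : ∀ j, δ j ∈ periodLattice τ) :
    pairGauss (ξ + δ) τ = pairGauss ξ τ := by
  refine Finset.prod_congr rfl fun p _ => ?_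
  rw [Pi.add_apply, Pi.add_apply, add_sub_add_comm, add_add_add_comm,
    gaussNorm_jtheta1_add hτ (sub_mem (hδ _) (hδ _)),
    gaussNorm_jtheta1_add hτ (add_mem (hδ _) (hδ _))]

lemma gaussDenom_add (hτ : τ.im ≠ 0) (hδ : ∀ j, δ j ∈ periodLattice τ) (R : RootType) :
    gaussDenom R (ξ + δ) τ = gaussDenom R ξ τ := by
  have h2τ : (2 * τ).im ≠ 0 := by simpa [Complex.mul_im] using hτ
  have hτ2 : (τ / 2).im ≠ 0 := by simpa [Complex.div_ofNat_im] using hτ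
  cases R <;> simp only [gaussDenom, pairGauss_add ξ hτ hδ]
  case A =>
    rw [prod_pairs_gaussNorm_sub_add ξ hτ hδ, show ∑ k, (ξ + δ) k = ∑ k, ξ k + ∑ k, δ k from
      Finset.sum_add_distrib, gaussNorm_thetaS_add N hτ (sum_mem fun j _ => hδ j)]
  all_goals
    congr 1
    refine Finset.prod_congr rfl fun l _ => ?_
    simp only [Pi.add_apply, mul_add]
  · exact gaussNorm_jtheta1_add hτ (hδ l) _
  · exact gaussNorm_jtheta1_add h2τ (two_mul_mem_periodLattice_two_mul (hδ l)) _
  · exact gaussNorm_jtheta1_add hτ (two_mul_mem_periodLattice (hδ l)) _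
  · exact gaussNorm_jtheta1_add hτ2 (periodLattice_le_half τ (hδ l)) _
  · rw [gaussNorm_jtheta1_add hτ (hδ l),
      gaussNorm_jtheta0_add h2τ (two_mul_mem_periodLattice_two_mul (hδ l))]

end Invariance

lemma im_I_mul_div (W L : ℝ) : (I * W / L : ℂ).im = W / L := by
  simp [Complex.div_ofReal_im]

lemma QR_eq_gaussDenom_sq {N : ℕ} (hN : 0 < N) {L : ℝ} (hL : L ≠ 0) (W : ℝ) (R : RootType)
    (z : Fin N → ℂ) : QR R L W z = gaussDenom R (fun j => z j / L) (I * W / L) ^ 2 := by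
  have hexp (n : ℝ) : -(2 * π * n / (L * W)) * ∑ j, (z j).im ^ 2 =
      -(2 * π * (n * (∑ j, (z j / L).im ^ 2) / (I * W / L).im)) := by
    rw [im_I_mul_div]
    simp only [Complex.div_ofReal_im, div_pow, ← Finset.sum_div]
    field_simp
  cases R
  case A =>
    rw [gaussDenom_A_eq, weightedNorm_sq, norm_mul, mul_pow, ← mul_assoc, ← hexp, thetaS,
      ite_apply, ite_apply]
    rfl
  all_goals
    rw [gaussDenom_eq _ _ hN (by simp), weightedNorm_sq, ← hexp]
    rfl

lemma update_add_div_eq {N : ℕ} (z : Fin N → ℂ) (m : Fin N) (d c : ℂ) :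
    (fun j => Function.update z m (z m + d) j / c) =
      (fun j => z j / c) + Pi.single m (d / c) := by
  ext j
  rcases eq_or_ne j m with rfl | h
  · simp [add_div]
  · simp [h]

lemma single_mem_periodLattice {N : ℕ} {τ c : ℂ} (hc : c ∈ periodLattice τ) (m j : Fin N) :
    (Pi.single m c : Fin N → ℂ) j ∈ periodLattice τ := by
  rw [Pi.single_apply]
  split_ifs
  exacts [hc, zero_mem _]

theorem statement1_general (N : ℕ) (L W : ℝ) (hL : 0 < L) (hW : 0 < W)
    (R : RootType) (m : Fin N) (z : Fin N → ℂ) :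
    QR R L W (Function.update z m (z m + (L : ℂ))) = QR R L W z ∧
    QR R L W (Function.update z m (z m + I * W)) = QR R L W z := by
  have hτ : (I * W / L : ℂ).im ≠ 0 := by
    rw [im_I_mul_div]
    exact div_ne_zero hW.ne' hL.ne'
  have key (d : ℂ) (hd : d / L ∈ periodLattice (I * W / L)) :
      QR R L W (Function.update z m (z m + d)) = QR R L W z := by
    rw [QR_eq_gaussDenom_sq m.pos hL.ne', QR_eq_gaussDenom_sq m.pos hL.ne', update_add_div_eq,
      gaussDenom_add _ hτ (single_mem_periodLattice hd m)]
  refine ⟨key _ ?_, key _ (self_mem_periodLattice _)⟩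
  rw [div_self (by exact_mod_cast hL.ne')]
  exact one_mem_periodLattice _

theorem statement1 (N : ℕ) (hN : 1 ≤ N) (L W : ℝ) (hL : 0 < L) (hW : 0 < W)
    (R : RootType) (m : Fin N) (z : Fin N → ℂ) :
    QR R L W (Function.update z m (z m + (L : ℂ))) = QR R L W z ∧
    QR R L W (Function.update z m (z m + I * W)) = QR R L W z :=
  statement1_general N L W hL hW R m z
end
end

section
/- For type A_{N−1}, for all j, k ∈ {1,…,N} and every y ∈ ℝ, ∫₀^L conj(M_j(x+iy)) M_k(x+iy) dx = δ_{jk} · L e^{−4πJ(j)y/L} θ₂(2(J(j)τ + i𝒩y/L); 2𝒩τ). -/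
/-!
Expanding `θ₂`, the function `x ↦ M_j(x + iy)` is an absolutely convergent exponential sum
`∑ₙ cₙ e^{2πi ωₙ x / L}` with frequencies `ωₙ = N(n - 1/2) + J(j)`. All frequencies differ by
integers, so integrating `conj(M_j) M_k` term by term over `[0, L]` kills every pair of terms
with different frequencies, and `N m + j = N n + k` with `0 ≤ j, k < N` forces `m = n` and
`j = k`. The surviving diagonal terms `|cₙ|²` are, up to the factor `e^{-4πJy/L}`, the terms of
`θ₂` with doubled arguments.
-/

open Complex MeasureTheory
open scoped Real ComplexConjugate

noncomputable section

/-- For type A_{N−1}: M_j(z) = e^{2πiJz/L} θ₂(Jτ + Nz/L; Nτ), with τ = iW/L. -/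
def MA (N : ℕ) (L W : ℝ) (Jj : ℝ) (z : ℂ) : ℂ :=
  Complex.exp (2 * π * I * Jj * z / L) *
    jtheta2 ((Jj : ℂ) * (I * W / L) + N * z / L) (N * (I * W / L))

/-- J(j) = j − 1/2 for 1-based j; for the 0-based index j : Fin N this is j + 1/2. -/
def JA {N : ℕ} (j : Fin N) : ℝ := (j : ℕ) + 1 / 2

def jtheta2Term (n : ℤ) (v τ : ℂ) : ℂ :=
  cexp (π * I * τ * ((n : ℂ) - 1 / 2) ^ 2) * cexp ((2 * (n : ℂ) - 1) * π * I * v)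

lemma jtheta2_eq_tsum (v τ : ℂ) : jtheta2 v τ = ∑' n : ℤ, jtheta2Term n v τ := rfl

lemma jtheta2Term_eq_mul_jacobiTheta₂_term (n : ℤ) (v τ : ℂ) :
    jtheta2Term n v τ =
      cexp (π * I * τ / 4 - π * I * v) * jacobiTheta₂_term n (v - τ / 2) τ := by
  rw [jtheta2Term, jacobiTheta₂_term, ← Complex.exp_add, ← Complex.exp_add]
  congr 1
  ring

lemma summable_norm_jtheta2Term (v : ℂ) {τ : ℂ} (hτ : 0 < τ.im) :
    Summable fun n : ℤ => ‖jtheta2Term n v τ‖ := by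
  simp_rw [jtheta2Term_eq_mul_jacobiTheta₂_term, norm_mul]
  exact ((summable_jacobiTheta₂_term_iff _ _).mpr hτ).norm.mul_left _

lemma jtheta2Term_add (n : ℤ) (v t τ : ℂ) :
    jtheta2Term n (v + t) τ = jtheta2Term n v τ * cexp ((2 * (n : ℂ) - 1) * π * I * t) := by
  rw [jtheta2Term, jtheta2Term, mul_add, Complex.exp_add]
  ring

lemma jtheta2Term_mul_self (n : ℤ) (v τ : ℂ) :
    jtheta2Term n v τ * jtheta2Term n v τ = jtheta2Term n (2 * v) (2 * τ) := by
  rw [jtheta2Term, jtheta2Term, mul_mul_mul_comm, ← Complex.exp_add, ← Complex.exp_add]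
  congr 2 <;> ring

lemma conj_jtheta2Term (n : ℤ) (v τ : ℂ) :
    conj (jtheta2Term n v τ) = jtheta2Term n (-conj v) (-conj τ) := by
  simp only [jtheta2Term, map_mul, ← Complex.exp_conj, map_sub, map_pow, map_intCast, map_ofNat,
    map_div₀, map_one, conj_ofReal, conj_I]
  congr 2 <;> ring


section ExponentialSums

variable {ι κ : Type*}

lemma norm_cexp_two_pi_I_mul_div (r x L : ℝ) : ‖cexp (2 * π * I * r * x / L)‖ = 1 := by
  rw [show (2 * π * I * r * x / L : ℂ) = ((2 * π * r * x / L : ℝ) : ℂ) * I by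
    push_cast; ring]
  exact norm_exp_ofReal_mul_I _

lemma intervalIntegral_cexp_two_pi_I_int_mul {L : ℝ} (hL : L ≠ 0) (d : ℤ) :
    ∫ x in (0 : ℝ)..L, cexp (2 * π * I * d * x / L) = if d = 0 then (L : ℂ) else 0 := by
  split_ifs with hd
  · simp [hd]
  have hc : (2 * π * I * d / L : ℂ) ≠ 0 := by simp [hd, hL, Real.pi_ne_zero]
  simp_rw [mul_div_right_comm _ ((_ : ℝ) : ℂ)]
  rw [integral_exp_mul_complex hc, div_mul_cancel₀ _ (ofReal_ne_zero.mpr hL),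
    show (2 * π * I * d : ℂ) = d * (2 * π * I) by ring, exp_int_mul_two_pi_mul_I]
  simp

lemma conj_mul_cexp_mul_mul_cexp (a b : ℂ) (c : ℝ) (m n : ℤ) (x L : ℝ) :
    conj (a * cexp (2 * π * I * (c + m : ℝ) * x / L)) *
        (b * cexp (2 * π * I * (c + n : ℝ) * x / L)) =
      conj a * b * cexp (2 * π * I * (n - m : ℤ) * x / L) := by
  rw [map_mul, ← exp_conj, mul_mul_mul_comm, ← exp_add]
  congr 2
  simp only [map_mul, map_div₀, map_ofNat, conj_ofReal, conj_I]
  push_cast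
  ring

lemma hasSum_conj_tsum_mul_tsum_cexp {a : ι → ℂ} {b : κ → ℂ} (ha : Summable (‖a ·‖))
    (hb : Summable (‖b ·‖)) (c : ℝ) (A : ι → ℤ) (B : κ → ℤ) (x L : ℝ) :
    HasSum
      (fun p : ι × κ => conj (a p.1) * b p.2 * cexp (2 * π * I * (B p.2 - A p.1 : ℤ) * x / L))
      (conj (∑' m, a m * cexp (2 * π * I * (c + A m : ℝ) * x / L)) *
        ∑' n, b n * cexp (2 * π * I * (c + B n : ℝ) * x / L)) := by
  have hf : Summable fun m => ‖conj (a m * cexp (2 * π * I * (c + A m : ℝ) * x / L))‖ := by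
    simpa only [RCLike.norm_conj, norm_mul, norm_cexp_two_pi_I_mul_div, mul_one] using ha
  have hg : Summable fun n => ‖b n * cexp (2 * π * I * (c + B n : ℝ) * x / L)‖ := by
    simpa only [norm_mul, norm_cexp_two_pi_I_mul_div, mul_one] using hb
  rw [conj_tsum, tsum_mul_tsum_of_summable_norm hf hg]
  simpa only [conj_mul_cexp_mul_mul_cexp] using (summable_mul_of_summable_norm hf hg).hasSum

theorem hasSum_intervalIntegral_conj_tsum_mul_tsum_cexp [Countable ι] [Countable κ] {L : ℝ}
    (hL : L ≠ 0) {a : ι → ℂ} {b : κ → ℂ} (ha : Summable (‖a ·‖))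
    (hb : Summable (‖b ·‖)) (c : ℝ) (A : ι → ℤ) (B : κ → ℤ) :
    HasSum (fun p : ι × κ => if A p.1 = B p.2 then L * (conj (a p.1) * b p.2) else 0)
      (∫ x in (0 : ℝ)..L, conj (∑' m, a m * cexp (2 * π * I * (c + A m : ℝ) * x / L)) *
        ∑' n, b n * cexp (2 * π * I * (c + B n : ℝ) * x / L)) := by
  have hnorm (d : ℤ) (x : ℝ) : ‖cexp (2 * π * I * d * x / L)‖ = 1 := by
    exact_mod_cast norm_cexp_two_pi_I_mul_div d x L
  have key := intervalIntegral.hasSum_integral_of_dominated_convergence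
    (a := 0) (b := L) (μ := volume) (fun p _ => ‖a p.1‖ * ‖b p.2‖)
    (F := fun (p : ι × κ) (x : ℝ) =>
      conj (a p.1) * b p.2 * cexp (2 * π * I * (B p.2 - A p.1 : ℤ) * x / L))
    (fun p => (by fun_prop : Continuous _).aestronglyMeasurable)
    (fun p => ae_of_all _ fun x _ => le_of_eq <| by
      rw [norm_mul, norm_mul, RCLike.norm_conj, hnorm, mul_one])
    (ae_of_all _ fun _ _ => ha.mul_of_nonneg hb (fun _ => norm_nonneg _) fun _ => norm_nonneg _)
    intervalIntegrable_const
    (ae_of_all _ fun x _ => hasSum_conj_tsum_mul_tsum_cexp ha hb c A B x L)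
  have hint (p : ι × κ) : ∫ x in (0 : ℝ)..L,
      conj (a p.1) * b p.2 * cexp (2 * π * I * (B p.2 - A p.1 : ℤ) * x / L)
        = if A p.1 = B p.2 then L * (conj (a p.1) * b p.2) else 0 := by
    simp only [intervalIntegral.integral_const_mul, intervalIntegral_cexp_two_pi_I_int_mul hL,
      sub_eq_zero, eq_comm (a := B p.2), mul_ite, mul_zero, mul_comm _ (L : ℂ)]
  simpa only [hint] using key

end ExponentialSums

lemma hasSum_prod_ite_eq_iff {ι α : Type*} [DecidableEq ι] [AddCommMonoid α]
    [TopologicalSpace α] (f : ι → ι → α) (a : α) :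
    HasSum (fun p : ι × ι => if p.1 = p.2 then f p.1 p.2 else 0) a ↔
      HasSum (fun i => f i i) a := by
  have hdiag : Function.Injective fun i : ι => (i, i) := fun _ _ h => congrArg Prod.fst h
  rw [← hdiag.hasSum_iff]
  · simp only [Function.comp_def, if_true]
  · rintro ⟨m, n⟩ hmn
    rw [if_neg]
    rintro (rfl : m = n)
    exact hmn ⟨m, rfl⟩

lemma intCast_mul_add_eq_iff {N : ℕ} (j k : Fin N) (m n : ℤ) :
    (N * m + j : ℤ) = N * n + k ↔ m = n ∧ j = k := by
  refine ⟨fun h => ?_, fun ⟨hmn, hjk⟩ => by rw [hmn, hjk]⟩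
  have h1 : (j : ℤ) % N = k % N := by
    simpa only [Int.mul_add_emod_self_left] using congrArg (· % (N : ℤ)) h
  rw [Int.emod_eq_of_lt (by positivity) (by exact_mod_cast j.isLt),
    Int.emod_eq_of_lt (by positivity) (by exact_mod_cast k.isLt)] at h1
  have hN : (N : ℤ) ≠ 0 := by exact_mod_cast j.pos.ne'
  exact ⟨mul_left_cancel₀ hN (by linarith), Fin.ext (by exact_mod_cast h1)⟩

section TypeA

variable (N : ℕ) (L W : ℝ)

def MACoeff (J y : ℝ) (n : ℤ) : ℂ :=
  cexp (-(2 * π * J * y / L)) * jtheta2Term n (J * (I * W / L) + I * N * y / L) (N * (I * W / L))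

/-- The frequency `N (n - 1/2) + J(j)` of the `n`-th term is written as `(1 - N)/2 + (N n + j)`,
so that frequency differences are visibly integers. -/
lemma MA_ofReal_add_mul_I_eq_tsum (j : Fin N) (x y : ℝ) :
    MA N L W (JA j) (x + I * y) = ∑' n : ℤ, MACoeff N L W (JA j) y n *
      cexp (2 * π * I * ((1 - N) / 2 + (N * n + j : ℤ) : ℝ) * x / L) := by
  rw [MA, jtheta2_eq_tsum, ← tsum_mul_left]
  refine tsum_congr fun n => ?_
  rw [show (JA j : ℂ) * (I * W / L) + N * (x + I * y) / L
      = (JA j * (I * W / L) + I * N * y / L) + N * x / L by ring, jtheta2Term_add, MACoeff]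
  have hexp : cexp (2 * π * I * JA j * (x + I * y) / L) *
      cexp ((2 * (n : ℂ) - 1) * π * I * (N * x / L)) = cexp (-(2 * π * JA j * y / L)) *
          cexp (2 * π * I * ((1 - N) / 2 + (N * n + j : ℤ) : ℝ) * x / L) := by
    rw [← exp_add, ← exp_add]
    congr 1
    push_cast [JA]
    linear_combination (2 * π * (j + 1 / 2) * y / L : ℂ) * I_sq
  linear_combination jtheta2Term n (JA j * (I * W / L) + I * N * y / L) (N * (I * W / L)) * hexp

variable {N L W}

lemma summable_norm_MACoeff (hN : 0 < N) (hL : 0 < L) (hW : 0 < W) (J y : ℝ) :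
    Summable (‖MACoeff N L W J y ·‖) := by
  have hτ : 0 < (N * (I * W / L) : ℂ).im := by
    simpa using mul_pos (Nat.cast_pos.mpr hN) (div_pos hW hL)
  simp_rw [MACoeff, norm_mul]
  exact (summable_norm_jtheta2Term _ hτ).mul_left _

lemma hasSum_conj_MACoeff_mul_self (hN : 0 < N) (hL : 0 < L) (hW : 0 < W) (J y : ℝ) :
    HasSum (fun n => conj (MACoeff N L W J y n) * MACoeff N L W J y n)
      (cexp (-(4 * π * J * y / L)) *
        jtheta2 (2 * (J * (I * W / L) + I * N * y / L)) (2 * N * (I * W / L))) := by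
  have hτ : 0 < (2 * N * (I * W / L) : ℂ).im := by
    simpa using mul_pos (mul_pos two_pos (Nat.cast_pos.mpr hN)) (div_pos hW hL)
  have hterm (n : ℤ) : conj (MACoeff N L W J y n) * MACoeff N L W J y n
      = cexp (-(4 * π * J * y / L)) *
          jtheta2Term n (2 * (J * (I * W / L) + I * N * y / L)) (2 * N * (I * W / L)) := by
    have hv : -conj (J * (I * W / L) + I * N * y / L : ℂ)
        = J * (I * W / L) + I * N * y / L := by
      simp only [map_add, map_mul, map_div₀, conj_ofReal, conj_I, map_natCast]
      ring
    have hτ' : -conj (N * (I * W / L) : ℂ) = N * (I * W / L) := by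
      simp only [map_mul, map_div₀, conj_ofReal, conj_I, map_natCast]
      ring
    rw [MACoeff, map_mul, ← exp_conj, conj_jtheta2Term, hv, hτ', mul_mul_mul_comm, ← exp_add,
      jtheta2Term_mul_self, mul_assoc (2 : ℂ) N]
    congr 2
    simp only [map_neg, map_div₀, map_mul, map_ofNat, conj_ofReal]
    ring
  simp only [hterm]
  exact ((summable_norm_jtheta2Term _ hτ).of_norm.hasSum).mul_left _

end TypeA

theorem statement2 (N : ℕ) (hN : 1 ≤ N) (L W : ℝ) (hL : 0 < L) (hW : 0 < W)
    (j k : Fin N) (y : ℝ) :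
    (∫ x in (0:ℝ)..L, conj (MA N L W (JA j) (x + I * y)) * MA N L W (JA k) (x + I * y))
      = if j = k then
          (L : ℂ) * Complex.exp (-(4 * π * JA j * y / L)) *
            jtheta2 (2 * ((JA j : ℂ) * (I * W / L) + I * N * y / L)) (2 * N * (I * W / L))
        else 0 := by
  have key := hasSum_intervalIntegral_conj_tsum_mul_tsum_cexp hL.ne'
    (summable_norm_MACoeff hN hL hW (JA j) y) (summable_norm_MACoeff hN hL hW (JA k) y)
    ((1 - N) / 2) (fun m => N * m + j) (fun n => N * n + k)
  simp only [← MA_ofReal_add_mul_I_eq_tsum, intCast_mul_add_eq_iff] at key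
  refine key.unique ?_
  split_ifs with hjk
  · subst hjk
    simp only [and_true]
    rw [hasSum_prod_ite_eq_iff fun m n =>
      (L : ℂ) * (conj (MACoeff N L W (JA j) y m) * MACoeff N L W (JA j) y n)]
    simpa only [mul_assoc] using (hasSum_conj_MACoeff_mul_self hN hL hW (JA j) y).mul_left (L : ℂ)
  · simpa only [hjk, and_false, if_false] using hasSum_zero
end
end

section
/- For the types B_N, B_N^∨ (with θ = θ₁ in the definition of M_j) and D_N with N ≥ 2 (with θ = θ₂ and the plus sign), for all j, k ∈ {1,…,N} and every y ∈ ℝ, ∫₀^L conj(M_j(x+iy)) M_k(x+iy) dx = δ_{jk} m_j(y), where m_j(y) = L { e^{4πJ(j)y/L} θ₂(2(J(j)τ − i𝒩y/L); 2𝒩τ) + e^{−4πJ(j)y/L} θ₂(2(J(j)τ + i𝒩y/L); 2𝒩τ) } for all interior indices j, except that m₁(y) = 4L θ₂(2i𝒩y/L; 2𝒩τ) for types B_N, B_N^∨ and D_N, and additionally for type D_N the index j = N carries m_N(y) = 2L { e^{4πJ(N)y/L} θ₂(2(J(N)τ − i𝒩y/L); 2𝒩τ) + e^{−4πJ(N)y/L}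 θ₂(2(J(N)τ + i𝒩y/L); 2𝒩τ) }. -/
open Complex MeasureTheory
open scoped Real ComplexConjugate

noncomputable section

/-- For types B_N, B_N^∨:
M_j(z) = e^{2πiJz/L} θ₁(Jτ + 𝒩z/L; 𝒩τ) − e^{−2πiJz/L} θ₁(Jτ − 𝒩z/L; 𝒩τ), τ = iW/L. -/
def MB (nn : ℕ) (L W : ℝ) (Jj : ℝ) (z : ℂ) : ℂ :=
  Complex.exp (2 * π * I * Jj * z / L) *
      jtheta1 ((Jj : ℂ) * (I * W / L) + nn * z / L) (nn * (I * W / L)) -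
    Complex.exp (-(2 * π * I * Jj * z / L)) *
      jtheta1 ((Jj : ℂ) * (I * W / L) - nn * z / L) (nn * (I * W / L))

/-- For type D_N:
M_j(z) = e^{2πiJz/L} θ₂(Jτ + 𝒩z/L; 𝒩τ) + e^{−2πiJz/L} θ₂(Jτ − 𝒩z/L; 𝒩τ), τ = iW/L. -/
def MD (nn : ℕ) (L W : ℝ) (Jj : ℝ) (z : ℂ) : ℂ :=
  Complex.exp (2 * π * I * Jj * z / L) *
      jtheta2 ((Jj : ℂ) * (I * W / L) + nn * z / L) (nn * (I * W / L)) +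
    Complex.exp (-(2 * π * I * Jj * z / L)) *
      jtheta2 ((Jj : ℂ) * (I * W / L) - nn * z / L) (nn * (I * W / L))

/-- The generic value L { e^{4πJy/L} θ₂(2(Jτ − i𝒩y/L); 2𝒩τ) + e^{−4πJy/L} θ₂(2(Jτ + i𝒩y/L); 2𝒩τ) }. -/
def mStd (nn : ℕ) (L W : ℝ) (Jj y : ℝ) : ℂ :=
  (L : ℂ) *
    (Complex.exp (4 * π * Jj * y / L) *
        jtheta2 (2 * ((Jj : ℂ) * (I * W / L) - I * nn * y / L)) (2 * nn * (I * W / L)) +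
      Complex.exp (-(4 * π * Jj * y / L)) *
        jtheta2 (2 * ((Jj : ℂ) * (I * W / L) + I * nn * y / L)) (2 * nn * (I * W / L)))

/-- m_j(y) for types B_N, B_N^∨ (0-based index j : Fin N with J(j) = j). -/
def mB (N nn : ℕ) (L W : ℝ) (j : Fin N) (y : ℝ) : ℂ :=
  if (j : ℕ) = 0 then (4 * L : ℂ) * jtheta2 (2 * I * nn * y / L) (2 * nn * (I * W / L))
  else mStd nn L W ((j : ℕ) : ℝ) y

/-- m_j(y) for type D_N (0-based index j : Fin N with J(j) = j). -/
def mD (N nn : ℕ) (L W : ℝ) (j : Fin N) (y : ℝ) : ℂ :=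
  if (j : ℕ) = 0 then (4 * L : ℂ) * jtheta2 (2 * I * nn * y / L) (2 * nn * (I * W / L))
  else if (j : ℕ) = N - 1 then 2 * mStd nn L W ((j : ℕ) : ℝ) y
  else mStd nn L W ((j : ℕ) : ℝ) y

/-!
With τ = iW/L, parity of θ₁ (odd) and θ₂ (even) writes each `M_j` as `F_J + F_{-J}`, where
`F_J(z) = e^{2πiJz/L} θ(Jτ + 𝒩z/L; 𝒩τ)`. On the line `z = x + iy`, `F_J` is an absolutely
convergent series in `e^{πiμx/L}` whose frequencies `μ = (2n-1)𝒩 + 2J` all have the parity of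
`𝒩`, so integrating over `[0, L]` keeps exactly the products of coefficients with coinciding
frequencies. Hence `F_J ⟂ F_K` unless `𝒩 ∣ K - J`, while `∫|F_J|²` is `L` times the sum of the
squared moduli of the coefficients, a θ₂-value with doubled arguments. For `0 ≤ J, K < N` the
only non-orthogonal pairs left are `F_{±J}, F_{±J}`, `F_0, F_{-0}` and, in type D where
`𝒩 = 2(N-1)`, `F_{N-1}, F_{-(N-1)}`; in that last case `F_{-J} = F_J` by the quasi-periodicity
of θ₂.
-/

namespace ThetaOrthogonality

def thetaTerm (v τ : ℂ) (n : ℤ) : ℂ :=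
  cexp (π * I * τ * ((n : ℂ) - 1 / 2) ^ 2 + (2 * (n : ℂ) - 1) * π * I * v)

def thetaSeries (u : ℤ → ℂ) (v τ : ℂ) : ℂ := ∑' n, u n * thetaTerm v τ n

lemma thetaTerm_eq_mul_jacobiTheta₂_term (v τ : ℂ) (n : ℤ) :
    thetaTerm v τ n = cexp (π * I * τ / 4 - π * I * v) * jacobiTheta₂_term n (v - τ / 2) τ := by
  rw [thetaTerm, jacobiTheta₂_term, ← Complex.exp_add]
  ring_nf

lemma summable_norm_thetaTerm (v : ℂ) {τ : ℂ} (hτ : 0 < τ.im) :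
    Summable fun n => ‖thetaTerm v τ n‖ := by
  simp_rw [thetaTerm_eq_mul_jacobiTheta₂_term, norm_mul]
  exact ((summable_jacobiTheta₂_term_iff _ τ).mpr hτ).norm.mul_left _

lemma thetaTerm_mul (v τ v' τ' : ℂ) (n : ℤ) :
    thetaTerm v τ n * thetaTerm v' τ' n = thetaTerm (v + v') (τ + τ') n := by
  simp only [thetaTerm, ← Complex.exp_add]
  ring_nf

lemma thetaTerm_add_left (v w τ : ℂ) (n : ℤ) :
    thetaTerm (v + w) τ n = thetaTerm v τ n * cexp ((2 * (n : ℂ) - 1) * π * I * w) := by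
  simp only [thetaTerm, ← Complex.exp_add]
  ring_nf

lemma conj_thetaTerm (v τ : ℂ) (n : ℤ) :
    conj (thetaTerm v τ n) = thetaTerm (-conj v) (-conj τ) n := by
  simp only [thetaTerm, ← Complex.exp_conj, map_add, map_mul, map_sub, map_pow, map_ofNat,
    map_one, map_div₀, map_intCast, Complex.conj_ofReal, Complex.conj_I]
  ring_nf

lemma thetaTerm_neg_left (v τ : ℂ) (n : ℤ) : thetaTerm (-v) τ (1 - n) = thetaTerm v τ n := by
  simp only [thetaTerm]
  push_cast
  ring_nf

lemma thetaSeries_neg_left (u : ℤ → ℂ) (v τ : ℂ) :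
    thetaSeries u (-v) τ = thetaSeries (fun n => u (1 - n)) v τ := by
  rw [thetaSeries, ← (Equiv.subLeft (1 : ℤ)).tsum_eq]
  simp only [Equiv.subLeft_apply, thetaTerm_neg_left]
  rfl

def theta1Coeff (n : ℤ) : ℂ := I * (-1) ^ n

lemma norm_theta1Coeff (n : ℤ) : ‖theta1Coeff n‖ = 1 := by
  simp [theta1Coeff]

lemma jtheta1_eq_thetaSeries (v τ : ℂ) : jtheta1 v τ = thetaSeries theta1Coeff v τ := by
  rw [jtheta1, thetaSeries, ← tsum_mul_left]
  refine tsum_congr fun n => ?_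
  rw [theta1Coeff, thetaTerm, Complex.exp_add]
  ring

lemma jtheta2_eq_thetaSeries (v τ : ℂ) : jtheta2 v τ = thetaSeries 1 v τ := by
  rw [jtheta2, thetaSeries]
  refine tsum_congr fun n => ?_
  rw [Pi.one_apply, one_mul, thetaTerm, Complex.exp_add]

lemma jtheta1_neg_left (v τ : ℂ) : jtheta1 (-v) τ = -jtheta1 v τ := by
  have h : (fun n => theta1Coeff (1 - n)) = fun n => -theta1Coeff n := by
    ext n
    rw [theta1Coeff, theta1Coeff, sub_eq_add_neg, zpow_add₀ (by norm_num), zpow_neg, ← inv_zpow,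
      inv_neg, inv_one, zpow_one]
    ring
  rw [jtheta1_eq_thetaSeries, jtheta1_eq_thetaSeries, thetaSeries_neg_left, h, thetaSeries,
    thetaSeries, ← tsum_neg]
  simp only [neg_mul]

lemma jtheta2_neg_left (v τ : ℂ) : jtheta2 (-v) τ = jtheta2 v τ := by
  rw [jtheta2_eq_thetaSeries, jtheta2_eq_thetaSeries, thetaSeries_neg_left]
  rfl

section TrigSeries

variable {ι κ : Type*} {L : ℝ}

def trigSeries (L : ℝ) (f : ι → ℂ) (μ : ι → ℤ) (x : ℝ) : ℂ :=
  ∑' i, f i * cexp (π * I * μ i * x / L)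

lemma norm_cexp_freq (L : ℝ) (d : ℤ) (x : ℝ) : ‖cexp (π * I * d * x / L)‖ = 1 := by
  rw [show π * I * d * x / L = ((π * d * x / L : ℝ) : ℂ) * I by push_cast; ring,
    Complex.norm_exp_ofReal_mul_I]

lemma continuous_trigSeries {f : ι → ℂ} (hf : Summable fun i => ‖f i‖) (μ : ι → ℤ) :
    Continuous (trigSeries L f μ) :=
  continuous_tsum (fun i => by fun_prop) hf fun i x => by
    rw [norm_mul, norm_cexp_freq, mul_one]

lemma integral_cexp_freq (hL : 0 < L) {d : ℤ} (hd : Even d) :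
    ∫ x in (0 : ℝ)..L, cexp (π * I * d * x / L) = if d = 0 then (L : ℂ) else 0 := by
  split_ifs with h
  · simp [h]
  obtain ⟨e, rfl⟩ := hd
  have hL' : (L : ℂ) ≠ 0 := Complex.ofReal_ne_zero.mpr hL.ne'
  have hc : π * I * ((e + e : ℤ) : ℂ) / L ≠ 0 := by
    have : (e : ℂ) ≠ 0 := Int.cast_ne_zero.mpr (by omega)
    simp [Real.pi_ne_zero, hL', this]
  have hperiod : π * I * ((e + e : ℤ) : ℂ) / L * L = e * (2 * π * I) := by
    field_simp
    push_cast
    ring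
  simp_rw [fun x : ℝ => mul_div_right_comm (π * I * ((e + e : ℤ) : ℂ)) (x : ℂ) (L : ℂ)]
  rw [integral_exp_mul_complex hc, hperiod, Complex.exp_int_mul_two_pi_mul_I]
  simp

lemma integral_conj_trigSeries_mul_trigSeries [Countable ι] [Countable κ] (hL : 0 < L)
    {f : ι → ℂ} {g : κ → ℂ} {μ : ι → ℤ} {ν : κ → ℤ} (hf : Summable fun i => ‖f i‖)
    (hg : Summable fun k => ‖g k‖) (hpar : ∀ i k, Even (ν k - μ i)) :
    ∫ x in (0 : ℝ)..L, conj (trigSeries L f μ x) * trigSeries L g ν x =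
      L * ∑' p : ι × κ, if μ p.1 = ν p.2 then conj (f p.1) * g p.2 else 0 := by
  set c : ι × κ → ℂ := fun p => conj (f p.1) * g p.2
  set d : ι × κ → ℤ := fun p => ν p.2 - μ p.1
  have hc : Summable fun p => ‖c p‖ :=
    (hf.mul_of_nonneg hg (fun _ => norm_nonneg _) fun _ => norm_nonneg _).congr fun p => by
      simp [c]
  have hconj : ∀ x : ℝ, HasSum (fun i => conj (f i) * cexp (π * I * (-μ i : ℤ) * x / L))
      (conj (trigSeries L f μ x)) := fun x => by
    refine (((hf.congr fun i => by rw [norm_mul, norm_cexp_freq, mul_one]).of_norm).hasSum.map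
      (starRingEnd ℂ) Complex.continuous_conj).congr_fun fun i => ?_
    simp only [Function.comp_apply, map_mul, ← Complex.exp_conj, map_div₀, Complex.conj_ofReal,
      Complex.conj_I, map_intCast]
    push_cast
    ring_nf
  have hprod : ∀ x : ℝ, HasSum (fun p => c p * cexp (π * I * d p * x / L))
      (conj (trigSeries L f μ x) * trigSeries L g ν x) := fun x => by
    have ha : Summable fun i => ‖conj (f i) * cexp (π * I * (-μ i : ℤ) * x / L)‖ :=
      hf.congr fun i => by rw [norm_mul, norm_cexp_freq, mul_one, RCLike.norm_conj]
    have hb : Summable fun k => ‖g k * cexp (π * I * ν k * x / L)‖ :=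
      hg.congr fun k => by rw [norm_mul, norm_cexp_freq, mul_one]
    have := (summable_mul_of_summable_norm ha hb).hasSum
    rw [← tsum_mul_tsum_of_summable_norm ha hb, (hconj x).tsum_eq] at this
    refine this.congr_fun fun p => ?_
    simp only [c, d]
    rw [mul_mul_mul_comm, ← Complex.exp_add]
    push_cast
    ring_nf
  have hint : ∀ p, ∫ x in (0 : ℝ)..L, c p * cexp (π * I * d p * x / L) =
      L * if μ p.1 = ν p.2 then c p else 0 := fun p => by
    rw [intervalIntegral.integral_const_mul, integral_cexp_freq hL (hpar p.1 p.2)]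
    by_cases h : μ p.1 = ν p.2
    · rw [if_pos (by omega), if_pos h, mul_comm]
    · rw [if_neg (by omega), if_neg h, mul_zero, mul_zero]
  rw [← tsum_mul_left, ← ((intervalIntegral.hasSum_integral_of_dominated_convergence
    (fun p _ => ‖c p‖) (fun p => by fun_prop) (fun p => ae_of_all _ fun x _ => by
      rw [norm_mul, norm_cexp_freq, mul_one]) (ae_of_all _ fun _ _ => hc)
    intervalIntegrable_const (ae_of_all _ fun x _ => hprod x)).tsum_eq)]
  exact tsum_congr hint

lemma tsum_ite_eq_of_injective {f g : ι → ℂ} (hf : Summable fun i => ‖f i‖)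
    (hg : Summable fun i => ‖g i‖) {μ : ι → ℤ} (hμ : Function.Injective μ) :
    ∑' p : ι × ι, (if μ p.1 = μ p.2 then conj (f p.1) * g p.2 else 0) = ∑' i, conj (f i) * g i := by
  have hs : Summable fun p : ι × ι => if μ p.1 = μ p.2 then conj (f p.1) * g p.2 else 0 := by
    refine Summable.of_norm_bounded
      (hf.mul_of_nonneg hg (fun _ => norm_nonneg _) fun _ => norm_nonneg _) fun p => ?_
    split_ifs
    · rw [norm_mul, RCLike.norm_conj]
    · rw [norm_zero]
      positivity
  rw [hs.tsum_prod]
  refine tsum_congr fun i => ?_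
  rw [tsum_eq_single i fun k hk => if_neg (hμ.ne (Ne.symm hk)), if_pos rfl]

end TrigSeries

section ThetaWave

variable (u : ℤ → ℂ) (𝒩 : ℕ) (L W : ℝ)

def thetaWave (J : ℤ) (z : ℂ) : ℂ :=
  cexp (2 * π * I * J * z / L) * thetaSeries u (J * (I * W / L) + 𝒩 * z / L) (𝒩 * (I * W / L))

def thetaFreq (J n : ℤ) : ℤ := (2 * n - 1) * 𝒩 + 2 * J

def selfPairing (J : ℤ) (y : ℝ) : ℂ :=
  cexp (-(4 * π * J * y / L)) *
    jtheta2 (2 * (J * (I * W / L) + I * 𝒩 * y / L)) (2 * 𝒩 * (I * W / L))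

def thetaCoeff (J : ℤ) (y : ℝ) (n : ℤ) : ℂ :=
  cexp (-(2 * π * J * y / L)) * u n *
    thetaTerm (J * (I * W / L) + I * 𝒩 * y / L) (𝒩 * (I * W / L)) n

lemma thetaWave_eq_trigSeries (J : ℤ) (x y : ℝ) :
    thetaWave u 𝒩 L W J (x + I * y) = trigSeries L (thetaCoeff u 𝒩 L W J y) (thetaFreq 𝒩 J) x := by
  rw [thetaWave, thetaSeries, trigSeries, ← tsum_mul_left]
  refine tsum_congr fun n => ?_
  rw [thetaCoeff, thetaFreq, show (J : ℂ) * (I * W / L) + 𝒩 * (x + I * y) / L =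
      J * (I * W / L) + I * 𝒩 * y / L + 𝒩 * x / L by ring, thetaTerm_add_left]
  have hexp : cexp (2 * π * I * J * (x + I * y) / L) *
      cexp ((2 * (n : ℂ) - 1) * π * I * (𝒩 * x / L)) =
      cexp (-(2 * π * J * y / L)) * cexp (π * I * (((2 * n - 1) * 𝒩 + 2 * J : ℤ) : ℂ) * x / L) := by
    rw [← Complex.exp_add, ← Complex.exp_add]
    congr 1
    push_cast
    linear_combination (2 * π * J * y / L : ℂ) * Complex.I_sq
  linear_combination (u n * thetaTerm (J * (I * W / L) + I * 𝒩 * y / L) (𝒩 * (I * W / L)) n) * hexp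

variable {u 𝒩 L W}

lemma summable_norm_thetaCoeff (hu : ∀ n, ‖u n‖ = 1) (h𝒩 : 0 < 𝒩) (hL : 0 < L) (hW : 0 < W)
    (J : ℤ) (y : ℝ) : Summable fun n => ‖thetaCoeff u 𝒩 L W J y n‖ := by
  have him : 0 < ((𝒩 : ℂ) * (I * W / L)).im := by
    rw [show (𝒩 : ℂ) * (I * W / L) = ((𝒩 * W / L : ℝ) : ℂ) * I by push_cast; ring,
      Complex.mul_I_im, Complex.ofReal_re]
    positivity
  simp_rw [thetaCoeff, norm_mul, hu, mul_one]
  exact (summable_norm_thetaTerm _ him).mul_left _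

lemma continuous_thetaWave (hu : ∀ n, ‖u n‖ = 1) (h𝒩 : 0 < 𝒩) (hL : 0 < L) (hW : 0 < W)
    (J : ℤ) (y : ℝ) : Continuous fun x : ℝ => thetaWave u 𝒩 L W J (x + I * y) := by
  simp_rw [thetaWave_eq_trigSeries]
  exact continuous_trigSeries (summable_norm_thetaCoeff hu h𝒩 hL hW J y) _

lemma integral_conj_thetaWave_mul_thetaWave (hu : ∀ n, ‖u n‖ = 1) (h𝒩 : 0 < 𝒩) (hL : 0 < L)
    (hW : 0 < W) (J K : ℤ) (y : ℝ) :
    ∫ x in (0 : ℝ)..L, conj (thetaWave u 𝒩 L W J (x + I * y)) * thetaWave u 𝒩 L W K (x + I * y) =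
      L * ∑' p : ℤ × ℤ, if thetaFreq 𝒩 J p.1 = thetaFreq 𝒩 K p.2 then
        conj (thetaCoeff u 𝒩 L W J y p.1) * thetaCoeff u 𝒩 L W K y p.2 else 0 := by
  simp_rw [thetaWave_eq_trigSeries]
  refine integral_conj_trigSeries_mul_trigSeries hL (summable_norm_thetaCoeff hu h𝒩 hL hW J y)
    (summable_norm_thetaCoeff hu h𝒩 hL hW K y) fun n m => ⟨(m - n) * 𝒩 + K - J, ?_⟩
  simp only [thetaFreq]
  ring

lemma integral_conj_thetaWave_mul_thetaWave_of_not_dvd (hu : ∀ n, ‖u n‖ = 1) (h𝒩 : 0 < 𝒩)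
    (hL : 0 < L) (hW : 0 < W) {J K : ℤ} (hJK : ¬ (𝒩 : ℤ) ∣ K - J) (y : ℝ) :
    ∫ x in (0 : ℝ)..L, conj (thetaWave u 𝒩 L W J (x + I * y)) * thetaWave u 𝒩 L W K (x + I * y) =
      0 := by
  rw [integral_conj_thetaWave_mul_thetaWave hu h𝒩 hL hW]
  refine mul_eq_zero_of_right _ ((tsum_congr fun p => if_neg fun h => hJK ?_).trans tsum_zero)
  exact ⟨p.1 - p.2, by simp only [thetaFreq] at h; linarith⟩

lemma conj_thetaCoeff_mul_self (hu : ∀ n, ‖u n‖ = 1) (J : ℤ) (y : ℝ) (n : ℤ) :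
    conj (thetaCoeff u 𝒩 L W J y n) * thetaCoeff u 𝒩 L W J y n =
      cexp (-(4 * π * J * y / L)) *
        thetaTerm (2 * (J * (I * W / L) + I * 𝒩 * y / L)) (2 * 𝒩 * (I * W / L)) n := by
  have hreal : conj (cexp (-(2 * π * J * y / L))) = cexp (-(2 * π * J * y / L)) := by
    rw [← Complex.exp_conj]
    simp [map_ofNat]
  have hunit : conj (u n) * u n = 1 := by
    rw [Complex.conj_mul', hu, Complex.ofReal_one, one_pow]
  have hv : -conj ((J : ℂ) * (I * W / L) + I * 𝒩 * y / L) = J * (I * W / L) + I * 𝒩 * y / L := by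
    simp only [map_add, map_mul, map_intCast, map_natCast, map_div₀, conj_I, conj_ofReal]
    ring
  have hτ : -conj ((𝒩 : ℂ) * (I * W / L)) = 𝒩 * (I * W / L) := by
    simp only [map_mul, map_natCast, map_div₀, conj_I, conj_ofReal]
    ring
  have hsq : cexp (-(2 * π * J * y / L)) * cexp (-(2 * π * J * y / L)) =
      cexp (-(4 * π * J * y / L)) := by
    rw [← Complex.exp_add]
    ring_nf
  rw [thetaCoeff, map_mul, map_mul, hreal, conj_thetaTerm, hv, hτ,
    two_mul ((J : ℂ) * (I * W / L) + I * 𝒩 * y / L),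
    show 2 * (𝒩 : ℂ) * (I * W / L) = 𝒩 * (I * W / L) + 𝒩 * (I * W / L) by ring, ← thetaTerm_mul,
    ← hsq]
  linear_combination (cexp (-(2 * π * J * y / L)) ^ 2 *
    thetaTerm (J * (I * W / L) + I * 𝒩 * y / L) (𝒩 * (I * W / L)) n ^ 2) * hunit

lemma integral_conj_thetaWave_mul_self (hu : ∀ n, ‖u n‖ = 1) (h𝒩 : 0 < 𝒩) (hL : 0 < L) (hW : 0 < W)
    (J : ℤ) (y : ℝ) :
    ∫ x in (0 : ℝ)..L, conj (thetaWave u 𝒩 L W J (x + I * y)) * thetaWave u 𝒩 L W J (x + I * y) =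
      L * selfPairing 𝒩 L W J y := by
  have hinj : Function.Injective (thetaFreq 𝒩 J) := fun n m h => by
    simp only [thetaFreq] at h
    have := mul_eq_zero.mp (show ((n - m) * 𝒩 : ℤ) = 0 by linarith)
    omega
  rw [integral_conj_thetaWave_mul_thetaWave hu h𝒩 hL hW, tsum_ite_eq_of_injective
    (summable_norm_thetaCoeff hu h𝒩 hL hW J y) (summable_norm_thetaCoeff hu h𝒩 hL hW J y) hinj,
    selfPairing, jtheta2_eq_thetaSeries, thetaSeries]
  congr 1
  rw [← tsum_mul_left]
  simp_rw [conj_thetaCoeff_mul_self hu, Pi.one_apply, one_mul]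

end ThetaWave

lemma integral_conj_add_mul_add {f₁ f₂ g₁ g₂ : ℝ → ℂ} (hf₁ : Continuous f₁) (hf₂ : Continuous f₂)
    (hg₁ : Continuous g₁) (hg₂ : Continuous g₂) (a b : ℝ) :
    ∫ x in a..b, conj (f₁ x + f₂ x) * (g₁ x + g₂ x) =
      ((∫ x in a..b, conj (f₁ x) * g₁ x) + ∫ x in a..b, conj (f₁ x) * g₂ x) +
        ((∫ x in a..b, conj (f₂ x) * g₁ x) + ∫ x in a..b, conj (f₂ x) * g₂ x) := by
  have hint : ∀ f g : ℝ → ℂ, Continuous f → Continuous g →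
      IntervalIntegrable (fun x => conj (f x) * g x) volume a b := fun f g hf hg =>
    ((Complex.continuous_conj.comp hf).mul hg).intervalIntegrable a b
  simp_rw [map_add, add_mul, mul_add]
  rw [intervalIntegral.integral_add ((hint _ _ hf₁ hg₁).add (hint _ _ hf₁ hg₂))
      ((hint _ _ hf₂ hg₁).add (hint _ _ hf₂ hg₂)),
    intervalIntegral.integral_add (hint _ _ hf₁ hg₁) (hint _ _ hf₁ hg₂),
    intervalIntegral.integral_add (hint _ _ hf₂ hg₁) (hint _ _ hf₂ hg₂)]

section ThetaMode

variable {u : ℤ → ℂ} {𝒩 : ℕ} {L W : ℝ}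

variable (u 𝒩 L W) in
def thetaMode (J : ℤ) (z : ℂ) : ℂ := thetaWave u 𝒩 L W J z + thetaWave u 𝒩 L W (-J) z

lemma integral_conj_thetaMode_mul_thetaMode (hu : ∀ n, ‖u n‖ = 1) (hL : 0 < L) (hW : 0 < W)
    {J K : ℤ} (hJ : 0 ≤ J) (hK : 0 ≤ K) (hJK : J + K < 𝒩) (y : ℝ) :
    ∫ x in (0 : ℝ)..L, conj (thetaMode u 𝒩 L W J (x + I * y)) * thetaMode u 𝒩 L W K (x + I * y) =
      if J = K then
        (if J = 0 then 4 * L * selfPairing 𝒩 L W 0 y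
          else L * (selfPairing 𝒩 L W (-J) y + selfPairing 𝒩 L W J y))
      else 0 := by
  have h𝒩 : 0 < 𝒩 := by omega
  have hcont := continuous_thetaWave hu h𝒩 hL hW (y := y)
  have hzero : ∀ {J' K' : ℤ}, J' ≠ K' → |K' - J'| < 𝒩 → ∫ x in (0 : ℝ)..L,
      conj (thetaWave u 𝒩 L W J' (x + I * y)) * thetaWave u 𝒩 L W K' (x + I * y) = 0 :=
    fun hne hlt => integral_conj_thetaWave_mul_thetaWave_of_not_dvd hu h𝒩 hL hW
      (fun hd => hne (sub_eq_zero.mp (Int.eq_zero_of_abs_lt_dvd hd hlt)).symm) y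
  simp only [thetaMode]
  rw [integral_conj_add_mul_add (hcont _) (hcont _) (hcont _) (hcont _)]
  split_ifs with hJK' hJ0
  · subst hJK' hJ0
    simp only [neg_zero, integral_conj_thetaWave_mul_self hu h𝒩 hL hW]
    ring
  · subst hJK'
    rw [integral_conj_thetaWave_mul_self hu h𝒩 hL hW, integral_conj_thetaWave_mul_self hu h𝒩 hL hW,
      hzero (by omega) (by rw [abs_lt]; omega), hzero (by omega) (by rw [abs_lt]; omega)]
    ring
  · rw [hzero hJK' (by rw [abs_lt]; omega), hzero (by omega) (by rw [abs_lt]; omega),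
      hzero (by omega) (by rw [abs_lt]; omega), hzero (by omega) (by rw [abs_lt]; omega)]
    ring

lemma thetaWave_one_neg_of_two_mul_eq {J : ℤ} (h : (𝒩 : ℤ) = 2 * J) (z : ℂ) :
    thetaWave 1 𝒩 L W (-J) z = thetaWave 1 𝒩 L W J z := by
  have h' : (𝒩 : ℂ) = 2 * J := by exact_mod_cast h
  simp only [thetaWave, thetaSeries, ← tsum_mul_left, Pi.one_apply, one_mul]
  rw [← (Equiv.addRight (1 : ℤ)).tsum_eq]
  refine tsum_congr fun n => ?_
  simp only [Equiv.coe_addRight, thetaTerm, ← Complex.exp_add, h']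
  push_cast
  ring_nf

lemma integral_conj_thetaMode_one_mul_self_of_two_mul_eq (hL : 0 < L) (hW : 0 < W) {J : ℤ}
    (hJ : 0 < J) (h : (𝒩 : ℤ) = 2 * J) (y : ℝ) :
    ∫ x in (0 : ℝ)..L, conj (thetaMode 1 𝒩 L W J (x + I * y)) * thetaMode 1 𝒩 L W J (x + I * y) =
      2 * (L * (selfPairing 𝒩 L W (-J) y + selfPairing 𝒩 L W J y)) := by
  have hu : ∀ n, ‖(1 : ℤ → ℂ) n‖ = 1 := fun n => by simp
  have h𝒩 : 0 < 𝒩 := by omega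
  have hcont := continuous_thetaWave hu h𝒩 hL hW J y
  have hsymm : selfPairing 𝒩 L W (-J) y = selfPairing 𝒩 L W J y := by
    have hL' : (L : ℂ) ≠ 0 := Complex.ofReal_ne_zero.mpr hL.ne'
    refine mul_left_cancel₀ hL' ?_
    rw [← integral_conj_thetaWave_mul_self hu h𝒩 hL hW,
      ← integral_conj_thetaWave_mul_self hu h𝒩 hL hW]
    simp only [thetaWave_one_neg_of_two_mul_eq h]
  simp only [thetaMode, thetaWave_one_neg_of_two_mul_eq h]
  rw [integral_conj_add_mul_add hcont hcont hcont hcont,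
    integral_conj_thetaWave_mul_self hu h𝒩 hL hW, hsymm]
  ring

end ThetaMode

lemma MB_eq_thetaMode (𝒩 : ℕ) (L W : ℝ) (J : ℤ) (z : ℂ) :
    MB 𝒩 L W J z = thetaMode theta1Coeff 𝒩 L W J z := by
  rw [MB, thetaMode, thetaWave, thetaWave, ← jtheta1_eq_thetaSeries, ← jtheta1_eq_thetaSeries,
    show ((-J : ℤ) : ℂ) * (I * W / L) + 𝒩 * z / L = -((J : ℂ) * (I * W / L) - 𝒩 * z / L) by
      push_cast; ring,
    jtheta1_neg_left]
  push_cast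
  ring_nf

lemma MD_eq_thetaMode (𝒩 : ℕ) (L W : ℝ) (J : ℤ) (z : ℂ) :
    MD 𝒩 L W J z = thetaMode 1 𝒩 L W J z := by
  rw [MD, thetaMode, thetaWave, thetaWave, ← jtheta2_eq_thetaSeries, ← jtheta2_eq_thetaSeries,
    show ((-J : ℤ) : ℂ) * (I * W / L) + 𝒩 * z / L = -((J : ℂ) * (I * W / L) - 𝒩 * z / L) by
      push_cast; ring,
    jtheta2_neg_left]
  push_cast
  ring_nf

lemma mStd_eq_selfPairing (𝒩 : ℕ) (L W : ℝ) (J : ℤ) (y : ℝ) :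
    mStd 𝒩 L W J y = L * (selfPairing 𝒩 L W (-J) y + selfPairing 𝒩 L W J y) := by
  rw [mStd, selfPairing, selfPairing, ← jtheta2_neg_left (2 * (_ - _))]
  push_cast
  ring_nf

lemma jtheta2_eq_selfPairing_zero (𝒩 : ℕ) (L W y : ℝ) :
    jtheta2 (2 * I * 𝒩 * y / L) (2 * 𝒩 * (I * W / L)) = selfPairing 𝒩 L W 0 y := by
  simp only [selfPairing, Int.cast_zero]
  ring_nf
  simp

theorem integral_conj_MB_mul_MB {N 𝒩 : ℕ} (h𝒩 : 2 * N ≤ 𝒩 + 1) {L W : ℝ} (hL : 0 < L)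
    (hW : 0 < W) (j k : Fin N) (y : ℝ) :
    ∫ x in (0 : ℝ)..L, conj (MB 𝒩 L W ((j : ℕ) : ℝ) (x + I * y)) *
        MB 𝒩 L W ((k : ℕ) : ℝ) (x + I * y) =
      if j = k then mB N 𝒩 L W j y else 0 := by
  have hM : ∀ (i : Fin N) (x : ℝ),
      MB 𝒩 L W ((i : ℕ) : ℝ) (x + I * y) = thetaMode theta1Coeff 𝒩 L W (i : ℕ) (x + I * y) :=
    fun i x => by exact_mod_cast MB_eq_thetaMode 𝒩 L W (i : ℕ) (x + I * y)
  simp only [hM]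
  rw [integral_conj_thetaMode_mul_thetaMode norm_theta1Coeff hL hW (by omega) (by omega)
    (by omega)]
  simp only [Nat.cast_inj, Fin.val_inj, Nat.cast_eq_zero]
  split_ifs with hjk hj0
  · rw [mB, if_pos hj0, jtheta2_eq_selfPairing_zero]
  · rw [mB, if_neg hj0]
    exact_mod_cast (mStd_eq_selfPairing 𝒩 L W (j : ℕ) y).symm
  · rfl

theorem integral_conj_MD_mul_MD {N : ℕ} (hN : 2 ≤ N) {L W : ℝ} (hL : 0 < L) (hW : 0 < W)
    (j k : Fin N) (y : ℝ) :
    ∫ x in (0 : ℝ)..L, conj (MD (2 * (N - 1)) L W ((j : ℕ) : ℝ) (x + I * y)) *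
        MD (2 * (N - 1)) L W ((k : ℕ) : ℝ) (x + I * y) =
      if j = k then mD N (2 * (N - 1)) L W j y else 0 := by
  have hM : ∀ (i : Fin N) (x : ℝ), MD (2 * (N - 1)) L W ((i : ℕ) : ℝ) (x + I * y) =
      thetaMode 1 (2 * (N - 1)) L W (i : ℕ) (x + I * y) :=
    fun i x => by exact_mod_cast MD_eq_thetaMode (2 * (N - 1)) L W (i : ℕ) (x + I * y)
  simp only [hM]
  by_cases hjN : j = k ∧ (j : ℕ) = N - 1
  · obtain ⟨rfl, hjN⟩ := hjN
    rw [integral_conj_thetaMode_one_mul_self_of_two_mul_eq hL hW (by omega) (by omega), if_pos rfl,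
      mD, if_neg (by omega), if_pos hjN]
    exact_mod_cast congrArg (2 * ·) (mStd_eq_selfPairing (2 * (N - 1)) L W (j : ℕ) y).symm
  rw [integral_conj_thetaMode_mul_thetaMode (fun n => by simp) hL hW (by omega) (by omega)
    (by omega)]
  simp only [Nat.cast_inj, Fin.val_inj, Nat.cast_eq_zero]
  split_ifs with hjk hj0
  · rw [mD, if_pos hj0, jtheta2_eq_selfPairing_zero]
  · rw [mD, if_neg hj0, if_neg (by omega)]
    exact_mod_cast (mStd_eq_selfPairing _ L W (j : ℕ) y).symm
  · rfl

end ThetaOrthogonality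

theorem statement4_general (N : ℕ) (L W : ℝ) (hL : 0 < L) (hW : 0 < W) :
    -- type B_N : 𝒩 = 2N−1, J(j) = j−1
    (∀ (j k : Fin N) (y : ℝ),
      (∫ x in (0:ℝ)..L,
        conj (MB (2 * N - 1) L W ((j : ℕ) : ℝ) (x + I * y)) *
          MB (2 * N - 1) L W ((k : ℕ) : ℝ) (x + I * y))
        = if j = k then mB N (2 * N - 1) L W j y else 0) ∧
    -- type B_N^∨ : 𝒩 = 2N, J(j) = j−1
    (∀ (j k : Fin N) (y : ℝ),
      (∫ x in (0:ℝ)..L,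
        conj (MB (2 * N) L W ((j : ℕ) : ℝ) (x + I * y)) *
          MB (2 * N) L W ((k : ℕ) : ℝ) (x + I * y))
        = if j = k then mB N (2 * N) L W j y else 0) ∧
    -- type D_N (N ≥ 2) : 𝒩 = 2(N−1), J(j) = j−1
    (2 ≤ N → ∀ (j k : Fin N) (y : ℝ),
      (∫ x in (0:ℝ)..L,
        conj (MD (2 * (N - 1)) L W ((j : ℕ) : ℝ) (x + I * y)) *
          MD (2 * (N - 1)) L W ((k : ℕ) : ℝ) (x + I * y))
        = if j = k then mD N (2 * (N - 1)) L W j y else 0) :=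
  ⟨ThetaOrthogonality.integral_conj_MB_mul_MB (by omega) hL hW,
    ThetaOrthogonality.integral_conj_MB_mul_MB (by omega) hL hW,
    fun hN => ThetaOrthogonality.integral_conj_MD_mul_MD hN hL hW⟩

theorem statement4 (N : ℕ) (hN : 1 ≤ N) (L W : ℝ) (hL : 0 < L) (hW : 0 < W) :
    -- type B_N : 𝒩 = 2N−1, J(j) = j−1
    (∀ (j k : Fin N) (y : ℝ),
      (∫ x in (0:ℝ)..L,
        conj (MB (2 * N - 1) L W ((j : ℕ) : ℝ) (x + I * y)) *
          MB (2 * N - 1) L W ((k : ℕ) : ℝ) (x + I * y))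
        = if j = k then mB N (2 * N - 1) L W j y else 0) ∧
    -- type B_N^∨ : 𝒩 = 2N, J(j) = j−1
    (∀ (j k : Fin N) (y : ℝ),
      (∫ x in (0:ℝ)..L,
        conj (MB (2 * N) L W ((j : ℕ) : ℝ) (x + I * y)) *
          MB (2 * N) L W ((k : ℕ) : ℝ) (x + I * y))
        = if j = k then mB N (2 * N) L W j y else 0) ∧
    -- type D_N (N ≥ 2) : 𝒩 = 2(N−1), J(j) = j−1
    (2 ≤ N → ∀ (j k : Fin N) (y : ℝ),
      (∫ x in (0:ℝ)..L,
        conj (MD (2 * (N - 1)) L W ((j : ℕ) : ℝ) (x + I * y)) *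
          MD (2 * (N - 1)) L W ((k : ℕ) : ℝ) (x + I * y))
        = if j = k then mD N (2 * (N - 1)) L W j y else 0) :=
  statement4_general N L W hL hW
end
end

section
/- For type A_{N−1}, for all j, k ∈ {1,…,N}, ∫₀^L ∫₀^W exp(−2πN y²/(LW)) · conj(M_j(x+iy)) M_k(x+iy) dy dx = δ_{jk} · (LW/√(2NW/L)) · e^{2πW J(j)²/(NL)}. -/
open Complex MeasureTheory
open scoped Real ComplexConjugate

noncomputable section

/-!
Each term of the theta series makes `M_J` a superposition of modes:
`M_J(z) = e^{πWJ²/(NL)} ∑ₙ e^{-πWα²/(NL) + 2πiαz/L}` over the frequencies `α = J + N(n - 1/2)`.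
Expanding `conj M_j · M_k` as a double series, which converges uniformly on the rectangle, and
integrating term by term, the `x`-integral over `[0, L]` kills every pair of frequencies `α ≠ β`,
because `β - α` is then a nonzero integer. Since `|k - j| < N`, only the pairs with `j = k` and
`m = n` survive. For those the weight completes the square,
`e^{-2πNy²/(LW)} |e^{-πWα²/(NL) + 2πiα(x+iy)/L}|² = e^{-2πN(y + αW/N)²/(LW)}`,
and as consecutive frequencies differ by `N`, the intervals `[αW/N, αW/N + W]` tile `ℝ`:
the diagonal sum is a single Gaussian integral.
-/

open Set

theorem summable_exp_neg_mul_sq_add_mul {a : ℝ} (ha : 0 < a) (b : ℝ) :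
    Summable fun n : ℤ => rexp (-a * n ^ 2 + b * n) := by
  have hθ := (summable_jacobiTheta₂_term_iff ((-(b / (2 * π)) : ℝ) * I) ((a / π : ℝ) * I)).mpr
    (by simpa using div_pos ha Real.pi_pos)
  refine hθ.norm.congr fun n => ?_
  rw [norm_jacobiTheta₂_term]
  congr 1
  simp only [mul_I_im, ofReal_re]
  field_simp
  ring

theorem summable_exp_neg_mul_sq_add_mul_affine {a v : ℝ} (ha : 0 < a) (hv : v ≠ 0) (u b : ℝ) :
    Summable fun n : ℤ => rexp (-a * (u + v * n) ^ 2 + b * (u + v * n)) := by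
  refine ((summable_exp_neg_mul_sq_add_mul (by positivity : 0 < a * v ^ 2)
    (b * v - 2 * a * u * v)).mul_left (rexp (-a * u ^ 2 + b * u))).congr fun n => ?_
  rw [← Real.exp_add]
  ring_nf

theorem intervalIntegral.hasSum_integral_of_norm_le {ι E : Type*} [Countable ι]
    [NormedAddCommGroup E] [NormedSpace ℝ E] [CompleteSpace E] {f : ι → ℝ → E} {B : ι → ℝ}
    {a b : ℝ} (hf : ∀ i, Continuous (f i)) (hB : Summable B)
    (hfB : ∀ i, ∀ x ∈ uIcc a b, ‖f i x‖ ≤ B i) :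
    HasSum (fun i => ∫ x in a..b, f i x) (∫ x in a..b, ∑' i, f i x) :=
  hasSum_integral_of_dominated_convergence (fun i _ => B i)
    (fun i => (hf i).aestronglyMeasurable)
    (fun i => ae_of_all _ fun x hx => hfB i x (uIoc_subset_uIcc hx))
    (ae_of_all _ fun _ _ => hB) intervalIntegrable_const
    (ae_of_all _ fun x hx =>
      (hB.of_norm_bounded fun i => hfB i x (uIoc_subset_uIcc hx)).hasSum)

theorem intervalIntegral.hasSum_integral_integral_of_norm_le {ι E : Type*} [Countable ι]
    [NormedAddCommGroup E] [NormedSpace ℝ E] [CompleteSpace E] {F : ι → ℝ → ℝ → E}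
    {B : ι → ℝ} {a b c d : ℝ} (hF : ∀ i, Continuous (Function.uncurry (F i)))
    (hB : Summable B) (hFB : ∀ i, ∀ x ∈ uIcc a b, ∀ y ∈ uIcc c d, ‖F i x y‖ ≤ B i) :
    HasSum (fun i => ∫ x in a..b, ∫ y in c..d, F i x y)
      (∫ x in a..b, ∫ y in c..d, ∑' i, F i x y) := by
  have inner : ∀ x ∈ uIcc a b, ∫ y in c..d, ∑' i, F i x y = ∑' i, ∫ y in c..d, F i x y :=
    fun x hx => (hasSum_integral_of_norm_le (fun i => (hF i).uncurry_left x) hB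
      (fun i => hFB i x hx)).tsum_eq.symm
  rw [integral_congr inner]
  exact hasSum_integral_of_norm_le
    (fun i => continuous_parametric_intervalIntegral_of_continuous' (hF i) c d)
    (hB.mul_right |d - c|)
    (fun i x hx => norm_integral_le_of_norm_le_const fun y hy => hFB i x hx y (uIoc_subset_uIcc hy))

theorem hasSum_intervalIntegral_add_int_mul {f : ℝ → ℝ} (hf : Integrable f) (b : ℝ) {W : ℝ}
    (hW : 0 < W) :
    HasSum (fun n : ℤ => ∫ u in (b + n * W)..(b + n * W + W), f u) (∫ u, f u) := by
  have hdisj : Pairwise (Function.onFun Disjoint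
      fun n : ℤ => Ioc (b + n • W) (b + (n + 1) • W)) := by
    intro m n hmn
    simp only [Function.onFun, zsmul_eq_mul, Ioc_disjoint_Ioc]
    push_cast
    rcases hmn.lt_or_gt with h | h
    · have : (m : ℝ) + 1 ≤ n := by exact_mod_cast h
      exact min_le_of_left_le (le_max_of_le_right (by nlinarith))
    · have : (n : ℝ) + 1 ≤ m := by exact_mod_cast h
      exact min_le_of_right_le (le_max_of_le_left (by nlinarith))
  have hU := hasSum_integral_iUnion (fun _ => measurableSet_Ioc) hdisj hf.integrableOn
  rw [iUnion_Ioc_add_zsmul hW b, setIntegral_univ] at hU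
  have hIoc (n : ℤ) : ∫ u in (b + n * W)..(b + n * W + W), f u
      = ∫ u in Ioc (b + n • W) (b + (n + 1) • W), f u := by
    rw [intervalIntegral.integral_of_le (by linarith), zsmul_eq_mul, zsmul_eq_mul]
    push_cast
    ring_nf
  simpa only [hIoc] using hU

theorem integral_exp_two_pi_int_mul_I {L : ℝ} (hL : L ≠ 0) (D : ℤ) :
    ∫ x in (0 : ℝ)..L, cexp (2 * π * D * x / L * I) = if D = 0 then (L : ℂ) else 0 := by
  split_ifs with hD
  · simp [hD]
  have hL' : (L : ℂ) ≠ 0 := ofReal_ne_zero.mpr hL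
  have hc : (2 * π * D / L * I : ℂ) ≠ 0 := by
    have : (D : ℂ) ≠ 0 := Int.cast_ne_zero.mpr hD
    simp [*, Real.pi_ne_zero]
  simp_rw [show ∀ x : ℝ, (2 * π * D * x / L * I : ℂ) = 2 * π * D / L * I * x by
    intro x; ring]
  rw [integral_exp_mul_complex hc, show (2 * π * D / L * I * L : ℂ) = D * (2 * π * I) by
    field_simp, exp_int_mul_two_pi_mul_I]
  simp

theorem Complex.conj_tsum_mul_tsum {ι ι' : Type*} {f : ι → ℂ} {g : ι' → ℂ}
    (hf : Summable fun i => ‖f i‖) (hg : Summable fun j => ‖g j‖) :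
    conj (∑' i, f i) * ∑' j, g j = ∑' p : ι × ι', conj (f p.1) * g p.2 := by
  rw [conj_tsum]
  exact tsum_mul_tsum_of_summable_norm (by simpa using hf) hg

theorem mul_sqrt_pi_div {N L W : ℝ} (hN : 0 < N) (hL : 0 < L) (hW : 0 < W) :
    L * √(π / (2 * π * N / (L * W))) = L * W / √(2 * N * W / L) := by
  rw [div_div_eq_mul_div, eq_div_iff (Real.sqrt_pos.mpr (by positivity)).ne', mul_assoc,
    ← Real.sqrt_mul (by positivity), show π * (L * W) / (2 * π * N) * (2 * N * W / L) = W ^ 2 by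
      field_simp, Real.sqrt_sq hW.le]

def modeFreq (N J : ℝ) (n : ℤ) : ℝ := J + N * (n - 1 / 2)

def thetaMode (N L W α : ℝ) (z : ℂ) : ℂ :=
  cexp (-(π * W * α ^ 2 / (N * L)) + 2 * π * I * α * z / L)

theorem MA_eq_tsum {N : ℕ} (hN : N ≠ 0) {L : ℝ} (hL : L ≠ 0) (W J : ℝ) (z : ℂ) :
    MA N L W J z =
      rexp (π * W * J ^ 2 / (N * L)) * ∑' n : ℤ, thetaMode N L W (modeFreq N J n) z := by
  rw [MA, jtheta2, ofReal_exp, ← tsum_mul_left, ← tsum_mul_left]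
  refine tsum_congr fun n => ?_
  rw [thetaMode, modeFreq, ← exp_add, ← exp_add, ← exp_add]
  congr 1
  have hL' : (L : ℂ) ≠ 0 := ofReal_ne_zero.mpr hL
  have hN' : (N : ℂ) ≠ 0 := Nat.cast_ne_zero.mpr hN
  push_cast
  field_simp
  ring_nf
  simp only [I_sq]
  ring

section

variable {N L W : ℝ}

theorem norm_thetaMode (α : ℝ) (z : ℂ) :
    ‖thetaMode N L W α z‖ = rexp (-(π * W * α ^ 2 / (N * L)) - 2 * π * α * z.im / L) := by
  rw [thetaMode, norm_exp, show -(π * W * α ^ 2 / (N * L) : ℂ) + 2 * π * I * α * z / L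
      = ((-(π * W * α ^ 2 / (N * L)) : ℝ) : ℂ) + ((2 * π * α / L : ℝ) : ℂ) * (I * z) by
    push_cast; ring]
  simp only [add_re, ofReal_re, re_ofReal_mul, I_mul_re]
  congr 1
  ring

theorem summable_norm_thetaMode (hN : 0 < N) (hL : 0 < L) (hW : 0 < W) (J : ℝ) (z : ℂ) :
    Summable fun n : ℤ => ‖thetaMode N L W (modeFreq N J n) z‖ := by
  refine (summable_exp_neg_mul_sq_add_mul_affine (by positivity : 0 < π * W / (N * L))
    hN.ne' (J - N / 2) (-(2 * π * z.im / L))).congr fun n => ?_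
  rw [norm_thetaMode, modeFreq]
  ring_nf

theorem norm_thetaMode_le (hL : 0 < L) (α : ℝ) {z : ℂ} (hz : z.im ∈ Icc 0 W) :
    ‖thetaMode N L W α z‖ ≤ ‖thetaMode N L W α 0‖ + ‖thetaMode N L W α (I * W)‖ := by
  simp only [norm_thetaMode, zero_im, I_mul_im, ofReal_re, mul_zero, zero_div, sub_zero]
  rcases le_total 0 α with hα | hα
  · refine le_add_of_le_of_nonneg (Real.exp_le_exp.mpr ?_) (Real.exp_pos _).le
    exact sub_le_self _ (by have := hz.1; positivity)
  · refine le_add_of_nonneg_of_le (Real.exp_pos _).le (Real.exp_le_exp.mpr ?_)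
    rw [sub_le_sub_iff_left]
    exact div_le_div_of_nonneg_right
      (mul_le_mul_of_nonpos_left hz.2 (by nlinarith [Real.pi_pos])) hL.le

theorem weight_mul_conj_thetaMode_mul_thetaMode (hL : L ≠ 0) (α β x y : ℝ) :
    (rexp (-(2 * π * N * y ^ 2 / (L * W))) : ℂ) *
        (conj (thetaMode N L W α (x + I * y)) * thetaMode N L W β (x + I * y))
      = cexp (2 * π * (β - α) * x / L * I) *
        (rexp (-(π * W * (α ^ 2 + β ^ 2) / (N * L)) - 2 * π * (α + β) * y / L
          - 2 * π * N * y ^ 2 / (L * W)) : ℂ) := by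
  have hL' : (L : ℂ) ≠ 0 := ofReal_ne_zero.mpr hL
  rw [thetaMode, thetaMode, ← exp_conj, ofReal_exp, ofReal_exp, ← exp_add, ← exp_add,
    ← exp_add]
  congr 1
  simp only [map_add, map_mul, map_div₀, map_neg, map_pow, conj_ofReal, conj_I, map_ofNat]
  push_cast
  field_simp
  ring_nf
  simp only [I_sq]
  ring

theorem norm_weight_mul_conj_thetaMode_mul_le (hN : 0 ≤ N) (hL : 0 < L)
    (hW : 0 < W) (α β x : ℝ) {y : ℝ} (hy : y ∈ Icc 0 W) :
    ‖(rexp (-(2 * π * N * y ^ 2 / (L * W))) : ℂ) *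
        (conj (thetaMode N L W α (x + I * y)) * thetaMode N L W β (x + I * y))‖
      ≤ (‖thetaMode N L W α 0‖ + ‖thetaMode N L W α (I * W)‖) *
        (‖thetaMode N L W β 0‖ + ‖thetaMode N L W β (I * W)‖) := by
  have him : (x + I * y : ℂ).im ∈ Icc 0 W := by simpa using hy
  rw [norm_mul, norm_mul, RCLike.norm_conj, norm_real, Real.norm_of_nonneg (Real.exp_pos _).le]
  refine (mul_le_of_le_one_left (by positivity)
    (Real.exp_le_one_iff.mpr (neg_nonpos.mpr (by positivity)))).trans ?_
  exact mul_le_mul (norm_thetaMode_le hL α him) (norm_thetaMode_le hL β him) (norm_nonneg _)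
    (by positivity)

theorem integral_integral_weight_conj_thetaMode_mul_thetaMode (hN : 0 < N) (hL : 0 < L)
    (hW : 0 < W) {α β : ℝ} {D : ℤ} (hD : β - α = D) :
    ∫ x in (0 : ℝ)..L, ∫ y in (0 : ℝ)..W, (rexp (-(2 * π * N * y ^ 2 / (L * W))) : ℂ) *
        (conj (thetaMode N L W α (x + I * y)) * thetaMode N L W β (x + I * y))
      = if α = β then
          ((L * ∫ u in (α * W / N)..(α * W / N + W), rexp (-(2 * π * N / (L * W)) * u ^ 2) : ℝ) : ℂ)
        else 0 := by
  have hD' : (β - α : ℂ) = D := by exact_mod_cast hD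
  simp only [weight_mul_conj_thetaMode_mul_thetaMode (N := N) (W := W) hL.ne', hD',
    intervalIntegral.integral_const_mul, intervalIntegral.integral_mul_const,
    integral_exp_two_pi_int_mul_I hL.ne']
  by_cases hαβ : α = β
  · subst hαβ
    have hD0 : D = 0 := by exact_mod_cast hD.symm.trans (sub_self α)
    rw [if_pos hD0, if_pos rfl, intervalIntegral.integral_ofReal, ofReal_mul]
    congr 2
    -- complete the square in `y`
    rw [add_comm _ W]
    nth_rw 1 [← zero_add (α * W / N)]
    rw [← intervalIntegral.integral_comp_add_right]
    refine intervalIntegral.integral_congr fun y _ => ?_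
    congr 1
    field_simp
    ring
  · have hD0 : D ≠ 0 := by
      rintro rfl
      exact hαβ (by simpa [sub_eq_zero, eq_comm] using hD)
    rw [if_neg hD0, if_neg hαβ, zero_mul]

end

theorem integral_integral_weight_conj_MA_mul_MA {N : ℕ} (hN : N ≠ 0) {L W : ℝ} (hL : 0 < L)
    (hW : 0 < W) (J K : ℝ) :
    ∫ x in (0 : ℝ)..L, ∫ y in (0 : ℝ)..W, (rexp (-(2 * π * N * y ^ 2 / (L * W))) : ℂ) *
        (conj (MA N L W J (x + I * y)) * MA N L W K (x + I * y))
      = (rexp (π * W * J ^ 2 / (N * L)) * rexp (π * W * K ^ 2 / (N * L)) : ℝ) *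
        ∑' p : ℤ × ℤ, ∫ x in (0 : ℝ)..L, ∫ y in (0 : ℝ)..W,
          (rexp (-(2 * π * N * y ^ 2 / (L * W))) : ℂ) *
            (conj (thetaMode N L W (modeFreq N J p.1) (x + I * y)) *
              thetaMode N L W (modeFreq N K p.2) (x + I * y)) := by
  have hN' : (0 : ℝ) < N := by positivity
  have hexpand (x y : ℝ) := calc
    (rexp (-(2 * π * N * y ^ 2 / (L * W))) : ℂ) *
        (conj (MA N L W J (x + I * y)) * MA N L W K (x + I * y))
      = (rexp (π * W * J ^ 2 / (N * L)) * rexp (π * W * K ^ 2 / (N * L)) : ℝ) *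
        ((rexp (-(2 * π * N * y ^ 2 / (L * W))) : ℂ) *
          (conj (∑' m : ℤ, thetaMode N L W (modeFreq N J m) (x + I * y)) *
            ∑' n : ℤ, thetaMode N L W (modeFreq N K n) (x + I * y))) := by
        rw [MA_eq_tsum hN hL.ne', MA_eq_tsum hN hL.ne', map_mul, conj_ofReal]
        push_cast
        ring
    _ = _ := by
        rw [conj_tsum_mul_tsum (summable_norm_thetaMode hN' hL hW J _)
          (summable_norm_thetaMode hN' hL hW K _), ← tsum_mul_left]
  simp only [hexpand, intervalIntegral.integral_const_mul]
  congr 1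
  have hB (J : ℝ) : Summable fun n : ℤ => ‖thetaMode N L W (modeFreq N J n) 0‖ +
      ‖thetaMode N L W (modeFreq N J n) (I * W)‖ :=
    (summable_norm_thetaMode hN' hL hW J 0).add (summable_norm_thetaMode hN' hL hW J (I * W))
  refine (intervalIntegral.hasSum_integral_integral_of_norm_le (fun p => ?_)
    ((hB J).mul_of_nonneg (hB K) (fun _ => by positivity) (fun _ => by positivity))
    (fun p x _ y hy => ?_)).tsum_eq.symm
  · simp only [thetaMode]
    fun_prop
  · rw [uIcc_of_le hW.le] at hy
    exact norm_weight_mul_conj_thetaMode_mul_le hN'.le hL hW _ _ x hy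

theorem hasSum_integral_gaussian_modeFreq {N W a : ℝ} (hN : N ≠ 0) (hW : 0 < W) (ha : 0 < a)
    (J : ℝ) :
    HasSum (fun n : ℤ => ∫ u in (modeFreq N J n * W / N)..(modeFreq N J n * W / N + W),
      rexp (-a * u ^ 2)) (√(π / a)) := by
  have hmode (n : ℤ) : modeFreq N J n * W / N = (J / N - 1 / 2) * W + n * W := by
    rw [modeFreq]
    field_simp
    ring
  simp only [hmode]
  rw [← integral_gaussian]
  exact hasSum_intervalIntegral_add_int_mul (integrable_exp_neg_mul_sq ha) _ hW

theorem modeFreq_JA_sub_modeFreq_JA {N : ℕ} (j k : Fin N) (m n : ℤ) :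
    modeFreq N (JA k) n - modeFreq N (JA j) m = ((k - j + N * (n - m) : ℤ) : ℝ) := by
  simp only [modeFreq, JA]
  push_cast
  ring

theorem modeFreq_JA_eq_iff {N : ℕ} {j k : Fin N} {m n : ℤ} :
    modeFreq N (JA j) m = modeFreq N (JA k) n ↔ j = k ∧ m = n := by
  refine ⟨fun h => ?_, fun ⟨hjk, hmn⟩ => by rw [hjk, hmn]⟩
  have hD : (k - j + N * (n - m) : ℤ) = 0 := by
    exact_mod_cast (modeFreq_JA_sub_modeFreq_JA j k m n).symm.trans (sub_eq_zero.mpr h.symm)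
  have hj := j.isLt
  have hk := k.isLt
  -- `k - j` is a multiple of `N` of absolute value less than `N`
  have hkj : (k : ℤ) - j = 0 :=
    Int.eq_zero_of_abs_lt_dvd (m := N) ⟨m - n, by linarith⟩ (abs_lt.mpr ⟨by omega, by omega⟩)
  have hnm : (N : ℤ) * (n - m) = 0 := by linarith
  rcases mul_eq_zero.mp hnm with hN | hnm
  · omega
  · exact ⟨Fin.ext (by omega), by omega⟩

theorem HasSum.ite_modeFreq_JA_eq {N : ℕ} (j : Fin N) {f : ℤ → ℂ} {s : ℂ} (hf : HasSum f s) :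
    HasSum (fun p : ℤ × ℤ =>
      if modeFreq N (JA j) p.1 = modeFreq N (JA j) p.2 then f p.1 else 0) s := by
  have hdiag : Function.Injective fun n : ℤ => (n, n) := fun _ _ h => (Prod.ext_iff.mp h).1
  refine (hdiag.hasSum_iff fun p hp => if_neg fun h => hp ?_).mp ?_
  · exact ⟨p.1, Prod.ext rfl (modeFreq_JA_eq_iff.mp h).2⟩
  · simpa [Function.comp_def] using hf

theorem statement5_general (N : ℕ) (L W : ℝ) (hL : 0 < L) (hW : 0 < W)
    (j k : Fin N) :
    (∫ x in (0:ℝ)..L, ∫ y in (0:ℝ)..W,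
        (Real.exp (-(2 * π * N * y ^ 2 / (L * W))) : ℂ) *
          (conj (MA N L W (JA j) (x + I * y)) * MA N L W (JA k) (x + I * y)))
      = if j = k then
          ((L * W / Real.sqrt (2 * N * W / L) *
              Real.exp (2 * π * W * (JA j) ^ 2 / (N * L)) : ℝ) : ℂ)
        else 0 := by
  have hN : (0 : ℝ) < N := by exact_mod_cast j.pos
  rw [integral_integral_weight_conj_MA_mul_MA j.pos.ne' hL hW, tsum_congr fun p : ℤ × ℤ =>
    integral_integral_weight_conj_thetaMode_mul_thetaMode hN hL hW
      (modeFreq_JA_sub_modeFreq_JA j k p.1 p.2)]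
  split_ifs with hjk
  · subst hjk
    have ha : 0 < 2 * π * N / (L * W) := by positivity
    rw [(HasSum.ite_modeFreq_JA_eq j (hasSum_ofReal.mpr
      ((hasSum_integral_gaussian_modeFreq hN.ne' hW ha (JA j)).mul_left L))).tsum_eq,
      ← ofReal_mul, mul_sqrt_pi_div hN hL hW, ← Real.exp_add]
    congr 1
    ring_nf
  · simp [modeFreq_JA_eq_iff, hjk]

theorem statement5 (N : ℕ) (hN : 1 ≤ N) (L W : ℝ) (hL : 0 < L) (hW : 0 < W)
    (j k : Fin N) :
    (∫ x in (0:ℝ)..L, ∫ y in (0:ℝ)..W,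
        (Real.exp (-(2 * π * N * y ^ 2 / (L * W))) : ℂ) *
          (conj (MA N L W (JA j) (x + I * y)) * MA N L W (JA k) (x + I * y)))
      = if j = k then
          ((L * W / Real.sqrt (2 * N * W / L) *
              Real.exp (2 * π * W * (JA j) ^ 2 / (N * L)) : ℝ) : ℂ)
        else 0 :=
  statement5_general N L W hL hW j k
end
end

section
/- Fix ρ > 0 and W > 0, and for N ∈ ℕ set L_N = N/(ρW) and τ_N = iρW²/N. Let K_N(z,z′) be the type A_{N−1} correlation kernel built with (L, τ) = (L_N, τ_N). Then for every z, z′ ∈ ℂ (z = x+iy, z′ = x′+iy′), lim_{N→∞} K_N(z,z′) = √2 ρ e^{−πρ(y²+(y′)²)} ∫₀^{√ρ W} e^{−2πλ² + 2πi√ρ(z−conj(z′))λ} θ₂(√ρ W (iλ + √ρ z); iρW²) θ₂(√ρ W (iλ − √ρ conj(z′)); iρW²) dλ. -/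
open Complex MeasureTheory
open scoped Real ComplexConjugate

noncomputable section

/-- h_j = (LW/√(2NW/L)) e^{2πW J(j)²/(NL)}. -/
def hA (N : ℕ) (L W : ℝ) (Jj : ℝ) : ℝ :=
  L * W / Real.sqrt (2 * N * W / L) * Real.exp (2 * π * W * Jj ^ 2 / (N * L))

/-- The type A_{N−1} correlation kernel with L = N/(ρW), τ = iρW²/N (J(j) = j − 1/2,
0-based index: J = n + 1/2). -/
def KA (N : ℕ) (ρ W : ℝ) (z z' : ℂ) : ℂ :=
  let L : ℝ := N / (ρ * W)
  Complex.exp (-(π * N * (z.im ^ 2 + z'.im ^ 2) / (L * W))) *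
    ∑ n : Fin N,
      MA N L W ((n : ℕ) + 1 / 2) z * conj (MA N L W ((n : ℕ) + 1 / 2) z') /
        hA N L W ((n : ℕ) + 1 / 2)


lemma riemann_midpoint {g : ℝ → ℂ} (hg : Continuous g) {b : ℝ} (hb : 0 < b) :
    Filter.Tendsto (fun N : ℕ => ((b / N : ℝ) : ℂ) * ∑ n ∈ Finset.range N, g (b * (n + 1/2) / N))
      Filter.atTop (nhds (∫ x in (0:ℝ)..b, g x)) := by
  have hInt : ∀ a c : ℝ, IntervalIntegrable g volume a c := fun a c => hg.intervalIntegrable a c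
  rw [Metric.tendsto_atTop]
  intro ε hε
  have hεb : 0 < ε / (2 * b) := by positivity
  have huc : UniformContinuousOn g (Set.Icc 0 b) :=
    isCompact_Icc.uniformContinuousOn_of_continuous hg.continuousOn
  rw [Metric.uniformContinuousOn_iff] at huc
  obtain ⟨δ, hδ, hδ'⟩ := huc (ε / (2 * b)) hεb
  obtain ⟨N₀, hN₀⟩ := exists_nat_gt (b / δ)
  refine ⟨max N₀ 1, fun N hN => ?_⟩
  have hN1 : 1 ≤ N := le_trans (le_max_right _ _) hN
  have hNpos : (0:ℝ) < N := by exact_mod_cast hN1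
  have hbN : b / N < δ := by
    have h1 : b / δ < N := lt_of_lt_of_le hN₀ (by exact_mod_cast le_trans (le_max_left _ _) hN)
    rw [div_lt_iff₀ hNpos]
    have h2 : b < N * δ := by
      calc b = b / δ * δ := by field_simp
      _ < N * δ := mul_lt_mul_of_pos_right h1 hδ
    nlinarith
  set a : ℕ → ℝ := fun k => b * k / N with ha
  set m : ℕ → ℝ := fun k => b * (k + 1/2) / N with hm
  have key : ∀ k, k < N → a k < m k ∧ m k < a (k+1) ∧ 0 ≤ a k ∧ a (k+1) ≤ b := by
    intro k hk
    have hk' : (k:ℝ) + 1 ≤ N := by exact_mod_cast hk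
    refine ⟨by rw [ha, hm, div_lt_div_iff₀ hNpos hNpos]; nlinarith,
      by rw [ha, hm, div_lt_div_iff₀ hNpos hNpos]; push_cast; nlinarith,
      by positivity, ?_⟩
    rw [ha, div_le_iff₀ hNpos]
    push_cast
    nlinarith
  have hstep : ∀ k : ℕ, a (k+1) - a k = b / N := by
    intro k
    rw [ha]
    push_cast
    field_simp
    ring
  -- membership of m k and points of Ioc (a k) (a (k+1)) in Icc 0 b
  have hsplit : ∫ x in (0:ℝ)..b, g x = ∑ k ∈ Finset.range N, ∫ x in a k..a (k+1), g x := by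
    rw [intervalIntegral.sum_integral_adjacent_intervals (fun k _ => hInt _ _)]
    have h0 : a 0 = 0 := by simp [ha]
    have hN' : a N = b := by rw [ha]; field_simp
    rw [h0, hN']
  have hconst : ∀ k ∈ Finset.range N,
      ((b / N : ℝ) : ℂ) * g (m k) = ∫ _ in a k..a (k+1), g (m k) := by
    intro k _
    rw [intervalIntegral.integral_const, hstep k]
    simp [Complex.real_smul]
  rw [dist_eq_norm, hsplit, Finset.mul_sum]
  rw [Finset.sum_congr rfl hconst, ← Finset.sum_sub_distrib]
  have hterm : ∀ k ∈ Finset.range N,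
      ‖(∫ _ in a k..a (k+1), g (m k)) - ∫ x in a k..a (k+1), g x‖ ≤ ε / (2 * b) * (b / N) := by
    intro k hk
    rw [Finset.mem_range] at hk
    obtain ⟨h1, h2, h3, h4⟩ := key k hk
    rw [← intervalIntegral.integral_sub (intervalIntegrable_const) (hInt _ _)]
    have := intervalIntegral.norm_integral_le_of_norm_le_const
      (a := a k) (b := a (k+1)) (C := ε / (2 * b)) (f := fun x => g (m k) - g x) ?_
    · calc ‖∫ x in a k..a (k+1), (g (m k) - g x)‖ ≤ ε / (2*b) * |a (k+1) - a k| := this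
      _ = ε / (2*b) * (b / N) := by rw [hstep k, abs_of_pos (by positivity)]
    · intro x hx
      rw [Set.uIoc_of_le (by linarith)] at hx
      obtain ⟨hx1, hx2⟩ := hx
      have hmmem : m k ∈ Set.Icc (0:ℝ) b := ⟨by linarith, by linarith⟩
      have hxmem : x ∈ Set.Icc (0:ℝ) b := ⟨by linarith, by linarith⟩
      have hdist : dist (m k) x < δ := by
        rw [Real.dist_eq, abs_lt]
        have := hstep k
        constructor <;> nlinarith
      have := hδ' (m k) hmmem x hxmem hdist
      rw [dist_eq_norm] at this
      exact this.le
  calc ‖∑ k ∈ Finset.range N, ((∫ _ in a k..a (k+1), g (m k)) - ∫ x in a k..a (k+1), g x)‖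
      ≤ ∑ k ∈ Finset.range N, ε / (2 * b) * (b / N) := norm_sum_le_of_le _ hterm
  _ = ε / 2 := by
      rw [Finset.sum_const, Finset.card_range, nsmul_eq_mul]
      field_simp
  _ < ε := by linarith

lemma jtheta2_eq (v τ : ℂ) :
    jtheta2 v τ = cexp (π * I * τ / 4 - π * I * v) * jacobiTheta₂ (v - τ / 2) τ := by
  rw [jtheta2, jacobiTheta₂, ← tsum_mul_left]
  refine tsum_congr fun n => ?_
  rw [jacobiTheta₂_term, ← Complex.exp_add, ← Complex.exp_add]
  congr 1
  ring

lemma jtheta2_conj (v τ : ℂ) (hτ : conj τ = -τ) :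
    conj (jtheta2 v τ) = jtheta2 (-conj v) τ := by
  rw [jtheta2, jtheta2, conj_tsum]
  refine tsum_congr fun n => ?_
  rw [map_mul, ← Complex.exp_conj, ← Complex.exp_conj]
  congr 1
  · simp only [map_mul, map_pow, map_sub, map_div₀, map_one, map_ofNat, conj_ofReal, conj_I,
      map_intCast, hτ]
    ring
  · simp only [map_mul, map_sub, map_one, map_ofNat, conj_ofReal, conj_I, map_intCast]
    ring

lemma continuous_jtheta2_comp {τ : ℂ} (hτ : 0 < τ.im) {f : ℝ → ℂ} (hf : Continuous f) :
    Continuous fun l => jtheta2 (f l) τ := by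
  have hjc : Continuous fun w => jacobiTheta₂ w τ := by
    rw [continuous_iff_continuousAt]
    intro w
    exact ContinuousAt.comp (g := fun p : ℂ × ℂ => jacobiTheta₂ p.1 p.2)
      (f := fun w : ℂ => (w, τ)) (continuousAt_jacobiTheta₂ w hτ)
      (continuousAt_id.prodMk continuousAt_const)
  simp only [jtheta2_eq]
  exact (Complex.continuous_exp.comp (by fun_prop)).mul (hjc.comp (by fun_prop))

lemma term_eq (ρ W : ℝ) (hρ : 0 < ρ) (hW : 0 < W) (z z' : ℂ) (N : ℕ) (hN : 1 ≤ N) (J : ℝ)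
    (hJ : 0 < J) (l : ℝ) (hl : l = Real.sqrt ρ * W * J / N) :
    MA N ((N : ℝ) / (ρ * W)) W J z * conj (MA N ((N : ℝ) / (ρ * W)) W J z') /
      ((hA N ((N : ℝ) / (ρ * W)) W J : ℝ) : ℂ)
    = ((Real.sqrt 2 : ℝ) : ℂ) * ((ρ : ℝ) : ℂ) * ((Real.sqrt ρ * W / N : ℝ) : ℂ) *
      (Complex.exp (-(2 * π * (l : ℝ) ^ 2) + 2 * π * I * (Real.sqrt ρ : ℝ) * (z - conj z') * (l : ℝ)) *
        jtheta2 ((Real.sqrt ρ : ℝ) * (W : ℝ) * (I * (l : ℝ) + (Real.sqrt ρ : ℝ) * z)) (I * (ρ : ℝ) * (W : ℝ) ^ 2) *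
        jtheta2 ((Real.sqrt ρ : ℝ) * (W : ℝ) * (I * (l : ℝ) - (Real.sqrt ρ : ℝ) * conj z')) (I * (ρ : ℝ) * (W : ℝ) ^ 2)) := by
  set s := Real.sqrt ρ with hsdef
  have hs0 : 0 < s := Real.sqrt_pos.mpr hρ
  have hρeq : ρ = s * s := (Real.mul_self_sqrt hρ.le).symm
  have hN0 : (N : ℝ) ≠ 0 := by
    have : (0:ℝ) < N := by exact_mod_cast hN
    exact this.ne'
  have hNc : (N : ℂ) ≠ 0 := by exact_mod_cast hN0
  have hW0 : W ≠ 0 := hW.ne'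
  have hs0' : s ≠ 0 := hs0.ne'
  set L : ℝ := (N : ℝ) / (ρ * W) with hLdef
  have hL0 : 0 < L := by rw [hLdef]; positivity
  have hLne : L ≠ 0 := hL0.ne'
  have hLc : (L : ℂ) ≠ 0 := by exact_mod_cast hLne
  rw [MA, MA, hA]
  -- canonical τ
  have hτ : ((N : ℕ) : ℂ) * (I * (W : ℂ) / (L : ℂ)) = I * (ρ : ℂ) * (W : ℂ) ^ 2 := by
    rw [hLdef, hρeq]
    push_cast
    field_simp
  have hconjτ : conj (I * (ρ : ℂ) * (W : ℂ) ^ 2) = -(I * (ρ : ℂ) * (W : ℂ) ^ 2) := by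
    simp only [map_mul, conj_I, map_pow, conj_ofReal]
    ring
  have harg1 : (J : ℂ) * (I * (W : ℂ) / (L : ℂ)) + (N : ℂ) * z / (L : ℂ)
      = (s : ℂ) * (W : ℂ) * (I * (l : ℂ) + (s : ℂ) * z) := by
    rw [hLdef, hl, hρeq]
    push_cast
    field_simp
  have harg2 : -(conj ((J : ℂ) * (I * (W : ℂ) / (L : ℂ)) + (N : ℂ) * z' / (L : ℂ)))
      = (s : ℂ) * (W : ℂ) * (I * (l : ℂ) - (s : ℂ) * conj z') := by
    simp only [map_add, map_mul, map_div₀, conj_I, conj_ofReal, map_natCast]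
    rw [hLdef, hl, hρeq]
    push_cast
    field_simp
    ring
  rw [hτ, map_mul, ← Complex.exp_conj, jtheta2_conj _ _ hconjτ, harg1, harg2]
  -- the sqrt in hA
  have hsq : Real.sqrt (2 * (N:ℝ) * W / L) = Real.sqrt 2 * (s * W) := by
    have h1 : 2 * (N:ℝ) * W / L = (Real.sqrt 2 * (s * W)) ^ 2 := by
      rw [mul_pow, Real.sq_sqrt (by norm_num : (0:ℝ) ≤ 2), hLdef, hρeq]
      field_simp
    rw [h1, Real.sqrt_sq (by positivity)]
  rw [hsq]
  -- scalar identity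
  have hck : (Real.sqrt 2 * ρ * (s * W / N)) * (L * W / (Real.sqrt 2 * (s * W))) = 1 := by
    have h2 : Real.sqrt 2 ≠ 0 := by positivity
    rw [hLdef, hρeq]
    field_simp
  have hexp : (2 * (π:ℂ) * I * (J:ℂ) * z / (L:ℂ)) + conj (2 * (π:ℂ) * I * (J:ℂ) * z' / (L:ℂ))
      - ((2 * π * W * J ^ 2 / ((N:ℝ) * L) : ℝ) : ℂ)
      = -(2 * (π:ℂ) * (l : ℂ) ^ 2) + 2 * (π:ℂ) * I * (s : ℂ) * (z - conj z') * (l : ℂ) := by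
    simp only [map_mul, map_div₀, conj_I, conj_ofReal, map_ofNat]
    rw [hLdef, hl, hρeq]
    push_cast
    field_simp
    ring
  have key : cexp (2 * (π:ℂ) * I * (J:ℂ) * z / (L:ℂ)) * cexp (conj (2 * (π:ℂ) * I * (J:ℂ) * z' / (L:ℂ)))
      = cexp (-(2 * (π:ℂ) * (l : ℂ) ^ 2) + 2 * (π:ℂ) * I * (s : ℂ) * (z - conj z') * (l : ℂ)) *
        cexp ((2 * π * W * J ^ 2 / ((N:ℝ) * L) : ℝ) : ℂ) *
        ((Real.sqrt 2 * ρ * (s * W / N) : ℝ) : ℂ) * ((L * W / (Real.sqrt 2 * (s * W)) : ℝ) : ℂ) := by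
    rw [← Complex.exp_add, ← Complex.exp_add]
    conv_rhs => rw [mul_assoc, ← Complex.ofReal_mul, hck, Complex.ofReal_one, mul_one]
    congr 1
    linear_combination hexp
  -- assemble
  have hhne : ((L * W / (Real.sqrt 2 * (s * W)) * Real.exp (2 * π * W * J ^ 2 / ((N:ℝ) * L)) : ℝ) : ℂ) ≠ 0 := by
    have h2 : (0:ℝ) < Real.sqrt 2 := by positivity
    have : (0:ℝ) < L * W / (Real.sqrt 2 * (s * W)) * Real.exp (2 * π * W * J ^ 2 / ((N:ℝ) * L)) := by
      positivity
    exact_mod_cast this.ne'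
  rw [div_eq_iff hhne]
  push_cast [Complex.ofReal_exp] at key ⊢
  linear_combination (jtheta2 ((s : ℂ) * (W : ℂ) * (I * (l : ℂ) + (s : ℂ) * z)) (I * (ρ : ℂ) * (W : ℂ) ^ 2) *
    jtheta2 ((s : ℂ) * (W : ℂ) * (I * (l : ℂ) - (s : ℂ) * conj z')) (I * (ρ : ℂ) * (W : ℂ) ^ 2)) * key

theorem statement11 (ρ W : ℝ) (hρ : 0 < ρ) (hW : 0 < W) (z z' : ℂ) :
    Filter.Tendsto (fun N : ℕ => KA N ρ W z z') Filter.atTop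
      (nhds (Real.sqrt 2 * ρ * Complex.exp (-(π * ρ * (z.im ^ 2 + z'.im ^ 2))) *
        ∫ l in (0:ℝ)..(Real.sqrt ρ * W),
          Complex.exp (-(2 * π * l ^ 2) + 2 * π * I * Real.sqrt ρ * (z - conj z') * l) *
            jtheta2 (Real.sqrt ρ * W * (I * l + Real.sqrt ρ * z)) (I * ρ * W ^ 2) *
            jtheta2 (Real.sqrt ρ * W * (I * l - Real.sqrt ρ * conj z')) (I * ρ * W ^ 2))) := by
  have hb : (0:ℝ) < Real.sqrt ρ * W := by positivity
  have hτim : (0:ℝ) < (I * (ρ:ℂ) * (W:ℂ) ^ 2).im := by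
    have h : I * (ρ:ℂ) * (W:ℂ) ^ 2 = Complex.I * ((ρ * W ^ 2 : ℝ) : ℂ) := by push_cast; ring
    rw [h, Complex.I_mul_im, Complex.ofReal_re]
    positivity
  have hg : Continuous (fun l : ℝ =>
      Complex.exp (-(2 * π * l ^ 2) + 2 * π * I * Real.sqrt ρ * (z - conj z') * l) *
        jtheta2 (Real.sqrt ρ * W * (I * l + Real.sqrt ρ * z)) (I * ρ * W ^ 2) *
        jtheta2 (Real.sqrt ρ * W * (I * l - Real.sqrt ρ * conj z')) (I * ρ * W ^ 2)) := by
    exact ((Complex.continuous_exp.comp (by fun_prop)).mul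
        (continuous_jtheta2_comp hτim (by fun_prop))).mul
      (continuous_jtheta2_comp hτim (by fun_prop))
  have hR := riemann_midpoint hg hb
  have hT := hR.const_mul
    ((Real.sqrt 2 : ℂ) * (ρ : ℂ) * Complex.exp (-(π * ρ * (z.im ^ 2 + z'.im ^ 2))))
  refine hT.congr' ?_ |>.mono_right (le_of_eq ?_)
  · filter_upwards [Filter.eventually_ge_atTop 1] with N hN
    have hN0 : (N : ℝ) ≠ 0 := by
      have : (0:ℝ) < N := by exact_mod_cast hN
      exact this.ne'
    simp only [KA]
    have hsum : (∑ n : Fin N,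
        MA N ((N:ℝ)/(ρ*W)) W (((n:ℕ):ℝ) + 1/2) z *
          conj (MA N ((N:ℝ)/(ρ*W)) W (((n:ℕ):ℝ) + 1/2) z') /
          ((hA N ((N:ℝ)/(ρ*W)) W (((n:ℕ):ℝ) + 1/2) : ℝ) : ℂ))
        = ∑ k ∈ Finset.range N,
        MA N ((N:ℝ)/(ρ*W)) W ((k:ℝ) + 1/2) z *
          conj (MA N ((N:ℝ)/(ρ*W)) W ((k:ℝ) + 1/2) z') /
          ((hA N ((N:ℝ)/(ρ*W)) W ((k:ℝ) + 1/2) : ℝ) : ℂ) :=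
      Fin.sum_univ_eq_sum_range (fun k : ℕ =>
        MA N ((N:ℝ)/(ρ*W)) W ((k:ℝ) + 1/2) z *
          conj (MA N ((N:ℝ)/(ρ*W)) W ((k:ℝ) + 1/2) z') /
          ((hA N ((N:ℝ)/(ρ*W)) W ((k:ℝ) + 1/2) : ℝ) : ℂ)) N
    rw [hsum]
    have hterm : ∀ k ∈ Finset.range N,
        MA N ((N:ℝ)/(ρ*W)) W ((k:ℝ) + 1/2) z *
          conj (MA N ((N:ℝ)/(ρ*W)) W ((k:ℝ) + 1/2) z') /
          ((hA N ((N:ℝ)/(ρ*W)) W ((k:ℝ) + 1/2) : ℝ) : ℂ)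
        = ((Real.sqrt 2 : ℝ) : ℂ) * ((ρ : ℝ) : ℂ) * ((Real.sqrt ρ * W / N : ℝ) : ℂ) *
          (Complex.exp (-(2 * π * ((Real.sqrt ρ * W * ((k:ℝ)+1/2) / N : ℝ) : ℝ) ^ 2) +
              2 * π * I * (Real.sqrt ρ : ℝ) * (z - conj z') *
              ((Real.sqrt ρ * W * ((k:ℝ)+1/2) / N : ℝ) : ℝ)) *
            jtheta2 ((Real.sqrt ρ : ℝ) * (W : ℝ) *
              (I * ((Real.sqrt ρ * W * ((k:ℝ)+1/2) / N : ℝ) : ℝ) + (Real.sqrt ρ : ℝ) * z))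
              (I * (ρ : ℝ) * (W : ℝ) ^ 2) *
            jtheta2 ((Real.sqrt ρ : ℝ) * (W : ℝ) *
              (I * ((Real.sqrt ρ * W * ((k:ℝ)+1/2) / N : ℝ) : ℝ) - (Real.sqrt ρ : ℝ) * conj z'))
              (I * (ρ : ℝ) * (W : ℝ) ^ 2)) := by
      intro k _
      exact term_eq ρ W hρ hW z z' N hN ((k:ℝ)+1/2) (by positivity)
        (Real.sqrt ρ * W * ((k:ℝ)+1/2) / N) rfl
    rw [Finset.sum_congr rfl hterm]
    have hpref : Complex.exp (-(π * (N:ℂ) * ((z.im:ℂ) ^ 2 + (z'.im:ℂ) ^ 2) /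
        (((N:ℝ)/(ρ*W) : ℝ) * (W:ℂ)))) = Complex.exp (-(π * ρ * (z.im ^ 2 + z'.im ^ 2))) := by
      congr 1
      have hρ0 : ρ ≠ 0 := hρ.ne'
      have hW0 : W ≠ 0 := hW.ne'
      have hNc : (N : ℂ) ≠ 0 := by exact_mod_cast hN0
      have hWc : (W : ℂ) ≠ 0 := by exact_mod_cast hW0
      have hρc : (ρ : ℂ) ≠ 0 := by exact_mod_cast hρ0
      push_cast
      field_simp
    rw [hpref, ← Finset.mul_sum]
    ring
  · rfl
end
end
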